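/- arXiv:math/9810109 — 8 statements merged into one kernel-verified Lean document; each statement's English description precedes it below -/
import Mathlib

section
/- Let 𝔤 = 𝔤₀ ⊕ 𝔤₁ be a Lie superalgebra over ℂ encoded in components, with 𝔤₀ solvable. Let 𝔨₁ ⊆ 𝔤₁ be a 𝔤₀-submodule with dim(𝔤₁/𝔨₁) = 1, and let μ : 𝔤₀ → ℂ be the weight of the one-dimensional 𝔤₀-module 𝔤₁/𝔨₁, i.e. x•ξ − μ(x)·ξ ∈ 𝔨₁ for all x ∈ 𝔤₀ and all ξ ∈ 𝔤₁. Then μ(⁅x,y⁆) = 0 for all x, y ∈ 𝔤₀ and μ(b(ξ,η)) = 0 for all ξ, η ∈ 𝔤₁; that is, the extension of μ by zero on 𝔤₁ is a character (one-dimensional representation) of 𝔤. -/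
/-!
On the line `𝔤₁/𝔨₁` every `x ∈ 𝔤₀` acts by the scalar `μ x`, so `⁅x, y⁆` acts by
`μ x μ y - μ y μ x = 0`, and the odd Jacobi identity becomes the scalar relation
`μ (b ξ η) • π ζ + μ (b η ζ) • π ξ + μ (b ζ ξ) • π η = 0` for the projection `π`.
Fixing `ξ₀` with `π ξ₀ ≠ 0`, the relation at `(ξ₀, ξ₀, ξ₀)` gives `3 μ (b ξ₀ ξ₀) = 0`,
at `(ξ, ξ₀, ξ₀)` it gives `2 μ (b ξ ξ₀) = 0`, and at `(ξ, η, ξ₀)` it gives `μ (b ξ η) = 0`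
(characteristic zero lets one cancel the factors 3 and 2).
-/

section WeightOfLine

variable {K L M V : Type*} [Field K] [LieRing L] [LieAlgebra K L]
  [AddCommGroup M] [Module K M] [LieRingModule L M] [AddCommGroup V] [Module K V]
  {μ : L →ₗ[K] K} {π : M →ₗ[K] V}

theorem Submodule.mkQ_lie_eq_smul_of_sub_mem {k : Submodule K M}
    (hμ : ∀ (x : L) (ξ : M), ⁅x, ξ⁆ - μ x • ξ ∈ k) (x : L) (ξ : M) :
    k.mkQ ⁅x, ξ⁆ = μ x • k.mkQ ξ := by
  rw [← sub_eq_zero, ← map_smul, ← map_sub, Submodule.mkQ_apply,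
    Submodule.Quotient.mk_eq_zero]
  exact hμ x ξ

theorem weight_cyclic_sum_smul_eq_zero (hπ : ∀ (x : L) (ξ : M), π ⁅x, ξ⁆ = μ x • π ξ)
    {b : M →ₗ[K] M →ₗ[K] L} (hb_jacobi : ∀ ξ η ζ : M, ⁅b ξ η, ζ⁆ + ⁅b η ζ, ξ⁆ + ⁅b ζ ξ, η⁆ = 0)
    (ξ η ζ : M) : μ (b ξ η) • π ζ + μ (b η ζ) • π ξ + μ (b ζ ξ) • π η = 0 := by
  simpa only [map_add, map_zero, hπ] using congrArg π (hb_jacobi ξ η ζ)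

variable [NoZeroSMulDivisors K V]

theorem weight_lie_eq_zero (hπ : ∀ (x : L) (ξ : M), π ⁅x, ξ⁆ = μ x • π ξ)
    {ξ : M} (hξ : π ξ ≠ 0) (x y : L) : μ ⁅x, y⁆ = 0 := by
  refine (smul_eq_zero.mp ?_).resolve_right hξ
  rw [← hπ, lie_lie, map_sub, hπ, hπ, hπ, hπ, smul_smul, smul_smul, mul_comm, sub_self]

theorem weight_oddBracket_eq_zero [CharZero K]
    (hπ : ∀ (x : L) (ξ : M), π ⁅x, ξ⁆ = μ x • π ξ)
    {b : M →ₗ[K] M →ₗ[K] L} (hb_symm : ∀ ξ η : M, b ξ η = b η ξ)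
    (hb_jacobi : ∀ ξ η ζ : M, ⁅b ξ η, ζ⁆ + ⁅b η ζ, ξ⁆ + ⁅b ζ ξ, η⁆ = 0)
    {ζ : M} (hζ : π ζ ≠ 0) (ξ η : M) : μ (b ξ η) = 0 := by
  have key := weight_cyclic_sum_smul_eq_zero hπ hb_jacobi
  have cancel : ∀ c : K, c • π ζ = 0 → c = 0 := fun c hc =>
    (smul_eq_zero.mp hc).resolve_right hζ
  have hζζ : μ (b ζ ζ) = 0 := by
    have h := key ζ ζ ζ
    rw [← add_smul, ← add_smul] at h
    simpa using (by linear_combination cancel _ h : (3 : K) * μ (b ζ ζ) = 0)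
  have hζ_right : ∀ θ : M, μ (b θ ζ) = 0 := fun θ => by
    have h := key θ ζ ζ
    rw [hζζ, zero_smul, add_zero, hb_symm ζ θ, ← add_smul] at h
    simpa using (by linear_combination cancel _ h : (2 : K) * μ (b θ ζ) = 0)
  apply cancel
  simpa only [hζ_right, hb_symm ζ ξ, zero_smul, add_zero] using key ξ η ζ

end WeightOfLine

theorem zero_extension_of_weight_is_character_general
    (L : Type) [LieRing L] [LieAlgebra ℂ L]
    (M : Type) [AddCommGroup M] [Module ℂ M]
    [LieRingModule L M]
    (b : M →ₗ[ℂ] M →ₗ[ℂ] L)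
    (hb_symm : ∀ ξ η : M, b ξ η = b η ξ)
    (hb_jacobi : ∀ ξ η ζ : M, ⁅b ξ η, ζ⁆ + ⁅b η ζ, ξ⁆ + ⁅b ζ ξ, η⁆ = 0)
    (k₁ : Submodule ℂ M)
    (hdim : Module.finrank ℂ (M ⧸ k₁) = 1)
    (μ : L →ₗ[ℂ] ℂ)
    (hμ : ∀ (x : L) (ξ : M), ⁅x, ξ⁆ - μ x • ξ ∈ k₁) :
    (∀ x y : L, μ ⁅x, y⁆ = 0) ∧ (∀ ξ η : M, μ (b ξ η) = 0) := by
  have hπ := Submodule.mkQ_lie_eq_smul_of_sub_mem hμ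
  have : Nontrivial (M ⧸ k₁) := Module.nontrivial_of_finrank_eq_succ hdim
  obtain ⟨v, hv⟩ := exists_ne (0 : M ⧸ k₁)
  obtain ⟨ξ₀, rfl⟩ := k₁.mkQ_surjective v
  exact ⟨weight_lie_eq_zero hπ hv, weight_oddBracket_eq_zero hπ hb_symm hb_jacobi hv⟩

/-- Let `𝔤 = 𝔤₀ ⊕ 𝔤₁` be a Lie superalgebra over `ℂ` encoded in
components (`L` is `𝔤₀`, `M` is `𝔤₁`, `b` is the bracket of two odd elements), with
`𝔤₀` solvable.  Let `k₁ ⊆ 𝔤₁` be a `𝔤₀`-submodule with `dim (𝔤₁/𝔨₁) = 1` and let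
`μ : 𝔤₀ → ℂ` be the weight of the one-dimensional `𝔤₀`-module `𝔤₁/𝔨₁`.  Then
`μ(⁅x,y⁆) = 0` for all `x y ∈ 𝔤₀` and `μ(b(ξ,η)) = 0` for all `ξ η ∈ 𝔤₁`;
that is, the extension of `μ` by zero on `𝔤₁` is a character of `𝔤`. -/
theorem zero_extension_of_weight_is_character
    (L : Type) [LieRing L] [LieAlgebra ℂ L] [FiniteDimensional ℂ L]
    [LieAlgebra.IsSolvable L]
    (M : Type) [AddCommGroup M] [Module ℂ M] [FiniteDimensional ℂ M]
    [LieRingModule L M] [LieModule ℂ L M]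
    (b : M →ₗ[ℂ] M →ₗ[ℂ] L)
    (hb_symm : ∀ ξ η : M, b ξ η = b η ξ)
    (hb_equivariant : ∀ (x : L) (ξ η : M), ⁅x, b ξ η⁆ = b ⁅x, ξ⁆ η + b ξ ⁅x, η⁆)
    (hb_jacobi : ∀ ξ η ζ : M, ⁅b ξ η, ζ⁆ + ⁅b η ζ, ξ⁆ + ⁅b ζ ξ, η⁆ = 0)
    (k₁ : Submodule ℂ M)
    (hk₁ : ∀ (x : L), ∀ ξ ∈ k₁, ⁅x, ξ⁆ ∈ k₁)
    (hdim : Module.finrank ℂ (M ⧸ k₁) = 1)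
    (μ : L →ₗ[ℂ] ℂ)
    (hμ : ∀ (x : L) (ξ : M), ⁅x, ξ⁆ - μ x • ξ ∈ k₁) :
    (∀ x y : L, μ ⁅x, y⁆ = 0) ∧ (∀ ξ η : M, μ (b ξ η) = 0) :=
  zero_extension_of_weight_is_character_general L M b hb_symm hb_jacobi k₁ hdim μ hμ
end

section
/- Let 𝔤 = 𝔤₀ ⊕ 𝔤₁ be a Lie superalgebra over ℂ encoded in components, with 𝔤₀ solvable. Let 𝔥₁ ⊆ 𝔨₁ ⊆ 𝔤₁ be 𝔤₀-submodules with dim(𝔨₁/𝔥₁) = 1, and let λ : 𝔤₀ → ℂ be the weight of the one-dimensional 𝔤₀-module 𝔨₁/𝔥₁, i.e. x•ξ − λ(x)·ξ ∈ 𝔥₁ for all x ∈ 𝔤₀ and all ξ ∈ 𝔨₁. Then λ(⁅x,y⁆) = 0 for all x, y ∈ 𝔤₀ and λ(b(ξ,η)) = 0 for all ξ, η ∈ 𝔨₁; that is, λ extended by zero on 𝔨₁ is a character of the subalgebra 𝔨 = 𝔤₀ ⊕ 𝔨₁. -/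
/-!
Modulo `h₁`, every `x ∈ 𝔤₀` acts on `k₁` as the scalar `λ x`; so for any `ζ ∈ k₁ \ h₁` (which
exists as `k₁ / h₁ ≠ 0`), `λ x = 0` exactly when `⁅x, ζ⁆ ∈ h₁`. Scalars commute, so
`⁅x, y⁆` acts by `λ x λ y - λ y λ x = 0`. For the odd part, the odd Jacobi identity gives
`3 ⁅b(ζ,ζ), ζ⁆ = 0`, so `λ(b(ζ,ζ)) = 0`; then `b(ζ,ζ)` maps `k₁` into `h₁`, and the Jacobi identity
for `(ξ, ζ, ζ)` and then for `(ξ, η, ζ)` successively gives `λ(b(ξ,ζ)) = 0` and `λ(b(ξ,η)) = 0`.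
-/

theorem Submodule.not_le_of_finrank_quotient_comap_pos {K M : Type*} [Field K]
    [AddCommGroup M] [Module K M] {h k : Submodule K M}
    (hdim : 0 < Module.finrank K (k ⧸ h.comap k.subtype)) : ¬ k ≤ h := by
  have : Nontrivial (k ⧸ h.comap k.subtype) := Module.nontrivial_of_finrank_pos hdim
  rw [Submodule.Quotient.nontrivial_iff, Ne, Submodule.comap_subtype_eq_top] at this
  exact this

section QuotientWeight

variable {K L M : Type*} [Field K] [LieRing L] [LieAlgebra K L]
  [AddCommGroup M] [Module K M] [LieRingModule L M]
  {h k : Submodule K M} {l : L →ₗ[K] K} {b : M →ₗ[K] M →ₗ[K] L}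

theorem weight_eq_zero_of_lie_mem (hl : ∀ x : L, ∀ ξ ∈ k, ⁅x, ξ⁆ - l x • ξ ∈ h)
    {ζ : M} (hζk : ζ ∈ k) (hζh : ζ ∉ h) {x : L} (hx : ⁅x, ζ⁆ ∈ h) : l x = 0 := by
  by_contra hx0
  have : l x • ζ ∈ h := by simpa using h.sub_mem hx (hl x ζ hζk)
  exact hζh ((h.smul_mem_iff hx0).mp this)

theorem lie_mem_of_weight_eq_zero (hl : ∀ x : L, ∀ ξ ∈ k, ⁅x, ξ⁆ - l x • ξ ∈ h)
    {x : L} (hx : l x = 0) {ξ : M} (hξ : ξ ∈ k) : ⁅x, ξ⁆ ∈ h := by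
  simpa [hx] using hl x ξ hξ

theorem lie_lie_sub_smul_mem [LieModule K L M] (hl : ∀ x : L, ∀ ξ ∈ k, ⁅x, ξ⁆ - l x • ξ ∈ h)
    (hh : ∀ x : L, ∀ ξ ∈ h, ⁅x, ξ⁆ ∈ h) (x y : L) {ξ : M} (hξ : ξ ∈ k) :
    ⁅x, ⁅y, ξ⁆⁆ - (l x * l y) • ξ ∈ h := by
  have key : ⁅x, ⁅y, ξ⁆ - l y • ξ⁆ + l y • (⁅x, ξ⁆ - l x • ξ) = ⁅x, ⁅y, ξ⁆⁆ - (l x * l y) • ξ := by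
    rw [lie_sub, lie_smul, smul_sub, smul_smul, mul_comm (l y)]
    abel
  exact key ▸ h.add_mem (hh x _ (hl y ξ hξ)) (h.smul_mem _ (hl x ξ hξ))

theorem weight_lie_eq_zero_s1 [LieModule K L M] (hl : ∀ x : L, ∀ ξ ∈ k, ⁅x, ξ⁆ - l x • ξ ∈ h)
    (hh : ∀ x : L, ∀ ξ ∈ h, ⁅x, ξ⁆ ∈ h) (hkh : ¬ k ≤ h) (x y : L) : l ⁅x, y⁆ = 0 := by
  obtain ⟨ζ, hζk, hζh⟩ := SetLike.not_le_iff_exists.mp hkh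
  refine weight_eq_zero_of_lie_mem hl hζk hζh ?_
  have key : (⁅x, ⁅y, ζ⁆⁆ - (l x * l y) • ζ) - (⁅y, ⁅x, ζ⁆⁆ - (l y * l x) • ζ) = ⁅⁅x, y⁆, ζ⁆ := by
    rw [lie_lie, mul_comm (l y)]
    abel
  exact key ▸ h.sub_mem (lie_lie_sub_smul_mem hl hh x y hζk) (lie_lie_sub_smul_mem hl hh y x hζk)

theorem lie_apply_mem_of_odd_jacobi (hb_jacobi : ∀ ξ η ζ : M, ⁅b ξ η, ζ⁆ + ⁅b η ζ, ξ⁆ + ⁅b ζ ξ, η⁆ = 0)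
    {ξ η ζ : M} (hηζ : ⁅b η ζ, ξ⁆ ∈ h) (hζξ : ⁅b ζ ξ, η⁆ ∈ h) :
    ⁅b ξ η, ζ⁆ ∈ h := by
  have key : ⁅b ξ η, ζ⁆ = -⁅b η ζ, ξ⁆ - ⁅b ζ ξ, η⁆ := by
    linear_combination (norm := abel) hb_jacobi ξ η ζ
  exact key ▸ h.sub_mem (h.neg_mem hηζ) hζξ

theorem lie_apply_self_self_eq_zero [CharZero K]
    (hb_jacobi : ∀ ξ η ζ : M, ⁅b ξ η, ζ⁆ + ⁅b η ζ, ξ⁆ + ⁅b ζ ξ, η⁆ = 0) (ζ : M) :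
    ⁅b ζ ζ, ζ⁆ = 0 := by
  have h3 : (3 : K) • ⁅b ζ ζ, ζ⁆ = 0 := by
    linear_combination (norm := module) hb_jacobi ζ ζ ζ
  exact (smul_eq_zero.mp h3).resolve_left three_ne_zero

theorem lie_apply_mem_of_lie_apply_self_mem [CharZero K] (hb_symm : ∀ ξ η : M, b ξ η = b η ξ)
    (hb_jacobi : ∀ ξ η ζ : M, ⁅b ξ η, ζ⁆ + ⁅b η ζ, ξ⁆ + ⁅b ζ ξ, η⁆ = 0)
    {ξ ζ : M} (hζζ : ⁅b ζ ζ, ξ⁆ ∈ h) : ⁅b ξ ζ, ζ⁆ ∈ h := by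
  have h2 : (2 : K) • ⁅b ξ ζ, ζ⁆ = -⁅b ζ ζ, ξ⁆ := by
    have hj := hb_jacobi ξ ζ ζ
    rw [hb_symm ζ ξ] at hj
    linear_combination (norm := module) hj
  rw [← h.smul_mem_iff (two_ne_zero (α := K)), h2]
  exact h.neg_mem hζζ

theorem weight_apply_eq_zero [CharZero K] (hb_symm : ∀ ξ η : M, b ξ η = b η ξ)
    (hb_jacobi : ∀ ξ η ζ : M, ⁅b ξ η, ζ⁆ + ⁅b η ζ, ξ⁆ + ⁅b ζ ξ, η⁆ = 0)
    (hl : ∀ x : L, ∀ ξ ∈ k, ⁅x, ξ⁆ - l x • ξ ∈ h) (hkh : ¬ k ≤ h) {ξ η : M} (hξ : ξ ∈ k) (hη : η ∈ k) : l (b ξ η) = 0 := by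
  obtain ⟨ζ, hζk, hζh⟩ := SetLike.not_le_iff_exists.mp hkh
  have hζζ : l (b ζ ζ) = 0 :=
    weight_eq_zero_of_lie_mem hl hζk hζh (lie_apply_self_self_eq_zero hb_jacobi ζ ▸ h.zero_mem)
  have hζ : ∀ ξ ∈ k, l (b ξ ζ) = 0 := fun ξ hξ ↦ weight_eq_zero_of_lie_mem hl hζk hζh
    (lie_apply_mem_of_lie_apply_self_mem hb_symm hb_jacobi (lie_mem_of_weight_eq_zero hl hζζ hξ))
  refine weight_eq_zero_of_lie_mem hl hζk hζh (lie_apply_mem_of_odd_jacobi hb_jacobi ?_ ?_)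
  · exact lie_mem_of_weight_eq_zero hl (hζ η hη) hξ
  · exact lie_mem_of_weight_eq_zero hl (hb_symm ζ ξ ▸ hζ ξ hξ) hη

end QuotientWeight

theorem zero_extension_of_weight_is_character_of_subalgebra_general
    (L : Type) [LieRing L] [LieAlgebra ℂ L]
    (M : Type) [AddCommGroup M] [Module ℂ M]
    [LieRingModule L M] [LieModule ℂ L M]
    (b : M →ₗ[ℂ] M →ₗ[ℂ] L)
    (hb_symm : ∀ ξ η : M, b ξ η = b η ξ)
    (hb_jacobi : ∀ ξ η ζ : M, ⁅b ξ η, ζ⁆ + ⁅b η ζ, ξ⁆ + ⁅b ζ ξ, η⁆ = 0)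
    (h₁ k₁ : Submodule ℂ M)
    (hh₁ : ∀ (x : L), ∀ ξ ∈ h₁, ⁅x, ξ⁆ ∈ h₁)
    (hdim : Module.finrank ℂ (↥k₁ ⧸ h₁.comap k₁.subtype) = 1)
    (l : L →ₗ[ℂ] ℂ)
    (hl : ∀ (x : L), ∀ ξ ∈ k₁, ⁅x, ξ⁆ - l x • ξ ∈ h₁) :
    (∀ x y : L, l ⁅x, y⁆ = 0) ∧ (∀ ξ ∈ k₁, ∀ η ∈ k₁, l (b ξ η) = 0) := by
  have hk₁h₁ := Submodule.not_le_of_finrank_quotient_comap_pos (hdim ▸ Nat.one_pos)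
  exact ⟨weight_lie_eq_zero_s1 hl hh₁ hk₁h₁,
    fun _ hξ _ hη ↦ weight_apply_eq_zero hb_symm hb_jacobi hl hk₁h₁ hξ hη⟩

/-- Let `𝔤 = 𝔤₀ ⊕ 𝔤₁` be a Lie superalgebra over `ℂ` encoded in
components (`L` is `𝔤₀`, `M` is `𝔤₁`, `b` is the bracket of two odd elements), with
`𝔤₀` solvable.  Let `h₁ ⊆ k₁ ⊆ 𝔤₁` be `𝔤₀`-submodules with `dim (k₁/h₁) = 1`, and
let `l : 𝔤₀ → ℂ` be the weight of the one-dimensional `𝔤₀`-module `k₁/h₁`.  Then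
`l(⁅x,y⁆) = 0` for all `x y ∈ 𝔤₀` and `l(b(ξ,η)) = 0` for all `ξ η ∈ k₁`; that is,
`l` extended by zero on `k₁` is a character of the subalgebra `𝔨 = 𝔤₀ ⊕ k₁`. -/
theorem zero_extension_of_weight_is_character_of_subalgebra
    (L : Type) [LieRing L] [LieAlgebra ℂ L] [FiniteDimensional ℂ L]
    [LieAlgebra.IsSolvable L]
    (M : Type) [AddCommGroup M] [Module ℂ M] [FiniteDimensional ℂ M]
    [LieRingModule L M] [LieModule ℂ L M]
    (b : M →ₗ[ℂ] M →ₗ[ℂ] L)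
    (hb_symm : ∀ ξ η : M, b ξ η = b η ξ)
    (hb_equivariant : ∀ (x : L) (ξ η : M), ⁅x, b ξ η⁆ = b ⁅x, ξ⁆ η + b ξ ⁅x, η⁆)
    (hb_jacobi : ∀ ξ η ζ : M, ⁅b ξ η, ζ⁆ + ⁅b η ζ, ξ⁆ + ⁅b ζ ξ, η⁆ = 0)
    (h₁ k₁ : Submodule ℂ M) (hsub : h₁ ≤ k₁)
    (hh₁ : ∀ (x : L), ∀ ξ ∈ h₁, ⁅x, ξ⁆ ∈ h₁)
    (hk₁ : ∀ (x : L), ∀ ξ ∈ k₁, ⁅x, ξ⁆ ∈ k₁)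
    (hdim : Module.finrank ℂ (↥k₁ ⧸ h₁.comap k₁.subtype) = 1)
    (l : L →ₗ[ℂ] ℂ)
    (hl : ∀ (x : L), ∀ ξ ∈ k₁, ⁅x, ξ⁆ - l x • ξ ∈ h₁) :
    (∀ x y : L, l ⁅x, y⁆ = 0) ∧ (∀ ξ ∈ k₁, ∀ η ∈ k₁, l (b ξ η) = 0) :=
  zero_extension_of_weight_is_character_of_subalgebra_general L M b hb_symm hb_jacobi h₁ k₁ hh₁ hdim
    l hl
end

section
/- Let 𝔤 = 𝔤₀ ⊕ 𝔤₁ be a Lie superalgebra over ℂ encoded in components, with 𝔤₀ solvable. Let 𝔨₁ ⊆ 𝔤₁ be a 𝔤₀-submodule with dim(𝔤₁/𝔨₁) = 1 and fix ξ ∈ 𝔤₁ with ξ ∉ 𝔨₁. Let W = (W₀, W₁, σ, τ) be an irreducible 𝔤-module (in components), and let (V₀, V₁) be a pair of subspaces V₀ ⊆ W₀, V₁ ⊆ W₁, invariant under the 𝔤₀-action and under σ(η) and τ(η) for all η ∈ 𝔨₁, which is nonzero, a proper subspace pair of (W₀, W₁), and irreducible as a module over the subalgebra 𝔨 = 𝔤₀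 ⊕ 𝔨₁. Then W₀ = V₀ ⊕ τ(ξ)(V₁) and W₁ = V₁ ⊕ σ(ξ)(V₀) as internal direct sums of vector spaces (i.e., W is the module induced from V: W = Ind^𝔤_𝔨(V)). -/
/-!
The subspace pair `U = (V₀ + τ(ξ)V₁, V₁ + σ(ξ)V₀)` is a `𝔤`-submodule, so `U = W` by irreducibility
of `W`; the pair `D = (V₀ ∩ σ(ξ)⁻¹V₁, V₁ ∩ τ(ξ)⁻¹V₀)` is a `𝔨`-submodule of `V`, and it cannot be
all of `V`, since otherwise `V` would be stable under `σ(ξ)`, `τ(ξ)` and hence a proper nonzero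
`𝔤`-submodule. So `D = 0`, which makes both sums direct. Because `𝔤₁ = 𝔨₁ + ℂξ`, stability under
all of `𝔤₁` only ever has to be checked on `𝔨₁` and on `ξ`.
-/

open Submodule

section CodimOne

variable {R M A B : Type*} [CommRing R] [AddCommGroup M] [Module R M]
  [AddCommGroup A] [Module R A] [AddCommGroup B] [Module R B]
  {k : Submodule R M} {ξ : M} (f : M →ₗ[R] A →ₗ[R] B) {P : Submodule R A} {Q : Submodule R B}

theorem LinearMap.apply_mem_of_sup_span_singleton_eq_top (htop : k ⊔ R ∙ ξ = ⊤)
    (hk : ∀ η ∈ k, ∀ a ∈ P, f η a ∈ Q) (hξ : ∀ a ∈ P, f ξ a ∈ Q) (ζ : M) :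
    ∀ a ∈ P, f ζ a ∈ Q := by
  have : k ⊔ R ∙ ξ ≤ (compatibleMaps P Q).comap f :=
    sup_le (fun η hη ↦ hk η hη) ((span_singleton_le_iff_mem _ _).mpr hξ)
  exact (htop ▸ this) mem_top

theorem LinearMap.apply_mem_sup_map (htop : k ⊔ R ∙ ξ = ⊤)
    (hk : ∀ η ∈ k, ∀ a ∈ P, f η a ∈ Q) (ζ : M) :
    ∀ a ∈ P, f ζ a ∈ Q ⊔ P.map (f ξ) :=
  f.apply_mem_of_sup_span_singleton_eq_top htop (fun η hη a ha ↦ mem_sup_left (hk η hη a ha))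
    (fun _ ha ↦ mem_sup_right (mem_map_of_mem ha)) ζ

end CodimOne

section OddAction

variable {K L M W₀ W₁ : Type*} [Field K] [LieRing L] [AddCommGroup M] [Module K M]
  [AddCommGroup W₀] [Module K W₀] [AddCommGroup W₁] [Module K W₁]
  {σ : M →ₗ[K] W₀ →ₗ[K] W₁} {τ : M →ₗ[K] W₁ →ₗ[K] W₀}
  {k : Submodule K M} {ξ : M} {V₀ : Submodule K W₀} {V₁ : Submodule K W₁}

theorem lie_mem_sup_map_of_codim_one
    [LieRingModule L M] [LieRingModule L W₀] [LieRingModule L W₁] (htop : k ⊔ K ∙ ξ = ⊤)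
    (hτ : ∀ (x : L) (η : M) (w : W₁), τ ⁅x, η⁆ w = ⁅x, τ η w⁆ - τ η ⁅x, w⁆)
    (hV₀L : ∀ (x : L), ∀ w ∈ V₀, ⁅x, w⁆ ∈ V₀) (hV₁L : ∀ (x : L), ∀ w ∈ V₁, ⁅x, w⁆ ∈ V₁)
    (hV₁τ : ∀ η ∈ k, ∀ w ∈ V₁, τ η w ∈ V₀) (x : L) :
    ∀ w ∈ V₀ ⊔ V₁.map (τ ξ), ⁅x, w⁆ ∈ V₀ ⊔ V₁.map (τ ξ) := by
  intro w hw
  obtain ⟨a, ha, _, ⟨v, hv, rfl⟩, rfl⟩ := mem_sup.mp hw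
  have hlie : ⁅x, τ ξ v⁆ = τ ⁅x, ξ⁆ v + τ ξ ⁅x, v⁆ := by rw [hτ]; abel
  rw [lie_add, hlie, ← add_assoc]
  exact add_mem (add_mem (mem_sup_left (hV₀L x a ha)) (τ.apply_mem_sup_map htop hV₁τ _ v hv))
    (mem_sup_right (mem_map_of_mem (hV₁L x v hv)))

theorem apply_apply_self_mem [Module K L] [LieRingModule L W₁] [NeZero (2 : K)]
    {b : M →ₗ[K] M →ₗ[K] L}
    (hστ : ∀ (η ζ : M) (w : W₁), σ ζ (τ η w) + σ η (τ ζ w) = ⁅b η ζ, w⁆)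
    (hV₁L : ∀ (x : L), ∀ w ∈ V₁, ⁅x, w⁆ ∈ V₁) {v : W₁} (hv : v ∈ V₁) :
    σ ξ (τ ξ v) ∈ V₁ := by
  rw [← smul_mem_iff V₁ (two_ne_zero : (2 : K) ≠ 0), two_smul, hστ]
  exact hV₁L _ v hv

theorem apply_mem_sup_map_of_codim_one [Module K L] [LieRingModule L W₁] [NeZero (2 : K)]
    {b : M →ₗ[K] M →ₗ[K] L} (htop : k ⊔ K ∙ ξ = ⊤)
    (hστ : ∀ (η ζ : M) (w : W₁), σ ζ (τ η w) + σ η (τ ζ w) = ⁅b η ζ, w⁆)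
    (hV₁L : ∀ (x : L), ∀ w ∈ V₁, ⁅x, w⁆ ∈ V₁)
    (hV₀σ : ∀ η ∈ k, ∀ w ∈ V₀, σ η w ∈ V₁) (hV₁τ : ∀ η ∈ k, ∀ w ∈ V₁, τ η w ∈ V₀) (ζ : M) :
    ∀ w ∈ V₀ ⊔ V₁.map (τ ξ), σ ζ w ∈ V₁ ⊔ V₀.map (σ ξ) := by
  have hστξ : ∀ v ∈ V₁, σ ζ (τ ξ v) ∈ V₁ ⊔ V₀.map (σ ξ) := by
    refine (σ.compl₂ (τ ξ)).apply_mem_of_sup_span_singleton_eq_top htop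
      (fun η hη v hv ↦ ?_) (fun v hv ↦ mem_sup_left (apply_apply_self_mem hστ hV₁L hv)) ζ
    rw [LinearMap.compl₂_apply, eq_sub_of_add_eq (hστ ξ η v)]
    exact sub_mem (mem_sup_left (hV₁L _ v hv)) (mem_sup_right (mem_map_of_mem (hV₁τ η hη v hv)))
  intro w hw
  obtain ⟨a, ha, _, ⟨v, hv, rfl⟩, rfl⟩ := mem_sup.mp hw
  rw [map_add]
  exact add_mem (σ.apply_mem_sup_map htop hV₀σ ζ a ha) (hστξ v hv)

theorem lie_mem_inf_comap_of_codim_one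
    [LieRingModule L M] [LieRingModule L W₀] [LieRingModule L W₁] (htop : k ⊔ K ∙ ξ = ⊤)
    (hσ : ∀ (x : L) (η : M) (w : W₀), σ ⁅x, η⁆ w = ⁅x, σ η w⁆ - σ η ⁅x, w⁆)
    (hV₀L : ∀ (x : L), ∀ w ∈ V₀, ⁅x, w⁆ ∈ V₀) (hV₁L : ∀ (x : L), ∀ w ∈ V₁, ⁅x, w⁆ ∈ V₁)
    (hV₀σ : ∀ η ∈ k, ∀ w ∈ V₀, σ η w ∈ V₁) (x : L) :
    ∀ w ∈ V₀ ⊓ V₁.comap (σ ξ), ⁅x, w⁆ ∈ V₀ ⊓ V₁.comap (σ ξ) := by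
  rintro w ⟨hw₀, hw₁⟩
  refine ⟨hV₀L x w hw₀, ?_⟩
  have hlie : σ ξ ⁅x, w⁆ = ⁅x, σ ξ w⁆ - σ ⁅x, ξ⁆ w := by rw [hσ]; abel
  show σ ξ ⁅x, w⁆ ∈ V₁
  rw [hlie]
  exact sub_mem (hV₁L x _ hw₁) (σ.apply_mem_of_sup_span_singleton_eq_top
    (P := V₀ ⊓ V₁.comap (σ ξ)) htop (fun η hη _ hw ↦ hV₀σ η hη _ hw.1) (fun _ hw ↦ hw.2)
    _ w ⟨hw₀, hw₁⟩)

theorem apply_mem_inf_comap [Module K L] [LieRingModule L W₀] {b : M →ₗ[K] M →ₗ[K] L}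
    (hτσ : ∀ (η ζ : M) (w : W₀), τ ζ (σ η w) + τ η (σ ζ w) = ⁅b η ζ, w⁆)
    (hV₀L : ∀ (x : L), ∀ w ∈ V₀, ⁅x, w⁆ ∈ V₀)
    (hV₀σ : ∀ η ∈ k, ∀ w ∈ V₀, σ η w ∈ V₁) (hV₁τ : ∀ η ∈ k, ∀ w ∈ V₁, τ η w ∈ V₀) :
    ∀ η ∈ k, ∀ w ∈ V₀ ⊓ V₁.comap (σ ξ), σ η w ∈ V₁ ⊓ V₀.comap (τ ξ) := by
  rintro η hη w ⟨hw₀, hw₁⟩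
  refine ⟨hV₀σ η hη w hw₀, ?_⟩
  show τ ξ (σ η w) ∈ V₀
  rw [eq_sub_of_add_eq (hτσ η ξ w)]
  exact sub_mem (hV₀L _ w hw₀) (hV₁τ η hη _ hw₁)

end OddAction

theorem irreducible_module_is_induced_from_codim_one_general
    (L : Type) [LieRing L] [LieAlgebra ℂ L]
    (M : Type) [AddCommGroup M] [Module ℂ M] [FiniteDimensional ℂ M]
    [LieRingModule L M]
    (b : M →ₗ[ℂ] M →ₗ[ℂ] L)
    (k₁ : Submodule ℂ M)
    (hdim : Module.finrank ℂ (M ⧸ k₁) = 1)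
    (ξ : M) (hξ : ξ ∉ k₁)
    -- the 𝔤-module W = (W₀, W₁, σ, τ) in components
    (W₀ : Type) [AddCommGroup W₀] [Module ℂ W₀]
    [LieRingModule L W₀]
    (W₁ : Type) [AddCommGroup W₁] [Module ℂ W₁]
    [LieRingModule L W₁]
    (σ : M →ₗ[ℂ] W₀ →ₗ[ℂ] W₁) (τ : M →ₗ[ℂ] W₁ →ₗ[ℂ] W₀)
    (hσ : ∀ (x : L) (η : M) (w : W₀), σ ⁅x, η⁆ w = ⁅x, σ η w⁆ - σ η ⁅x, w⁆)
    (hτ : ∀ (x : L) (η : M) (w : W₁), τ ⁅x, η⁆ w = ⁅x, τ η w⁆ - τ η ⁅x, w⁆)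
    (hτσ : ∀ (η ζ : M) (w : W₀), τ ζ (σ η w) + τ η (σ ζ w) = ⁅b η ζ, w⁆)
    (hστ : ∀ (η ζ : M) (w : W₁), σ ζ (τ η w) + σ η (τ ζ w) = ⁅b η ζ, w⁆)
    -- W is irreducible as a 𝔤-module
    (hirr : ∀ (U₀ : Submodule ℂ W₀) (U₁ : Submodule ℂ W₁),
      (∀ (x : L), ∀ w ∈ U₀, ⁅x, w⁆ ∈ U₀) → (∀ (x : L), ∀ w ∈ U₁, ⁅x, w⁆ ∈ U₁) →
      (∀ (η : M), ∀ w ∈ U₀, σ η w ∈ U₁) → (∀ (η : M), ∀ w ∈ U₁, τ η w ∈ U₀) →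
      (U₀ = ⊥ ∧ U₁ = ⊥) ∨ (U₀ = ⊤ ∧ U₁ = ⊤))
    -- (V₀, V₁) is a 𝔨-submodule of W, where 𝔨 = 𝔤₀ ⊕ k₁
    (V₀ : Submodule ℂ W₀) (V₁ : Submodule ℂ W₁)
    (hV₀L : ∀ (x : L), ∀ w ∈ V₀, ⁅x, w⁆ ∈ V₀)
    (hV₁L : ∀ (x : L), ∀ w ∈ V₁, ⁅x, w⁆ ∈ V₁)
    (hV₀σ : ∀ η ∈ k₁, ∀ w ∈ V₀, σ η w ∈ V₁)
    (hV₁τ : ∀ η ∈ k₁, ∀ w ∈ V₁, τ η w ∈ V₀)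
    -- which is nonzero and proper
    (hV_ne_bot : ¬(V₀ = ⊥ ∧ V₁ = ⊥))
    (hV_ne_top : ¬(V₀ = ⊤ ∧ V₁ = ⊤))
    -- and irreducible as a 𝔨-module
    (hVirr : ∀ (U₀ : Submodule ℂ W₀) (U₁ : Submodule ℂ W₁), U₀ ≤ V₀ → U₁ ≤ V₁ →
      (∀ (x : L), ∀ w ∈ U₀, ⁅x, w⁆ ∈ U₀) → (∀ (x : L), ∀ w ∈ U₁, ⁅x, w⁆ ∈ U₁) →
      (∀ η ∈ k₁, ∀ w ∈ U₀, σ η w ∈ U₁) → (∀ η ∈ k₁, ∀ w ∈ U₁, τ η w ∈ U₀) →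
      (U₀ = ⊥ ∧ U₁ = ⊥) ∨ (U₀ = V₀ ∧ U₁ = V₁)) :
    (V₀ ⊔ V₁.map (τ ξ) = ⊤ ∧ V₀ ⊓ V₁.map (τ ξ) = ⊥) ∧
    (V₁ ⊔ V₀.map (σ ξ) = ⊤ ∧ V₁ ⊓ V₀.map (σ ξ) = ⊥) := by
  have htop : k₁ ⊔ ℂ ∙ ξ = ⊤ := (sup_span_singleton_eq_top_iff hξ).mpr hdim
  have hU : V₀ ⊔ V₁.map (τ ξ) = ⊤ ∧ V₁ ⊔ V₀.map (σ ξ) = ⊤ := by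
    refine (hirr _ _ (lie_mem_sup_map_of_codim_one htop hτ hV₀L hV₁L hV₁τ)
      (lie_mem_sup_map_of_codim_one htop hσ hV₁L hV₀L hV₀σ)
      (apply_mem_sup_map_of_codim_one htop hστ hV₁L hV₀σ hV₁τ)
      (apply_mem_sup_map_of_codim_one htop hτσ hV₀L hV₁τ hV₀σ)).resolve_left ?_
    rintro ⟨h₀, h₁⟩
    exact hV_ne_bot ⟨le_bot_iff.mp (h₀ ▸ le_sup_left), le_bot_iff.mp (h₁ ▸ le_sup_left)⟩
  have hD : V₀ ⊓ V₁.comap (σ ξ) = ⊥ ∧ V₁ ⊓ V₀.comap (τ ξ) = ⊥ := by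
    refine (hVirr _ _ inf_le_left inf_le_left
      (lie_mem_inf_comap_of_codim_one htop hσ hV₀L hV₁L hV₀σ)
      (lie_mem_inf_comap_of_codim_one htop hτ hV₁L hV₀L hV₁τ)
      (apply_mem_inf_comap hτσ hV₀L hV₀σ hV₁τ)
      (apply_mem_inf_comap hστ hV₁L hV₁τ hV₀σ)).resolve_right ?_
    rintro ⟨h₀, h₁⟩
    rcases hirr V₀ V₁ hV₀L hV₁L
      (σ.apply_mem_of_sup_span_singleton_eq_top htop hV₀σ fun _ hw ↦ inf_eq_left.mp h₀ hw)
      (τ.apply_mem_of_sup_span_singleton_eq_top htop hV₁τ fun _ hw ↦ inf_eq_left.mp h₁ hw)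
      with h | h
    exacts [hV_ne_bot h, hV_ne_top h]
  refine ⟨⟨hU.1, ?_⟩, hU.2, ?_⟩
  · rw [inf_comm, map_inf_eq_map_inf_comap, hD.2, Submodule.map_bot]
  · rw [inf_comm, map_inf_eq_map_inf_comap, hD.1, Submodule.map_bot]

/-- Let `𝔤 = 𝔤₀ ⊕ 𝔤₁` be a Lie superalgebra over `ℂ` encoded in
components (`L` is `𝔤₀`, `M` is `𝔤₁`, `b` is the bracket of two odd elements), with
`𝔤₀` solvable.  Let `k₁ ⊆ 𝔤₁` be a `𝔤₀`-submodule with `dim (𝔤₁/k₁) = 1`, and fix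
`ξ ∈ 𝔤₁ \ k₁`.  Let `W = (W₀, W₁, σ, τ)` be an irreducible `𝔤`-module in components
and `(V₀, V₁)` a pair of subspaces invariant under `𝔤₀` and under `σ(η)`, `τ(η)` for
all `η ∈ k₁`, which is nonzero, proper, and irreducible over the subalgebra
`𝔨 = 𝔤₀ ⊕ k₁`.  Then `W₀ = V₀ ⊕ τ(ξ)(V₁)` and `W₁ = V₁ ⊕ σ(ξ)(V₀)` as internal
direct sums, i.e. `W = Ind^𝔤_𝔨 V`. -/
theorem irreducible_module_is_induced_from_codim_one
    (L : Type) [LieRing L] [LieAlgebra ℂ L] [FiniteDimensional ℂ L]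
    [LieAlgebra.IsSolvable L]
    (M : Type) [AddCommGroup M] [Module ℂ M] [FiniteDimensional ℂ M]
    [LieRingModule L M] [LieModule ℂ L M]
    (b : M →ₗ[ℂ] M →ₗ[ℂ] L)
    (hb_symm : ∀ ξ η : M, b ξ η = b η ξ)
    (hb_equivariant : ∀ (x : L) (ξ η : M), ⁅x, b ξ η⁆ = b ⁅x, ξ⁆ η + b ξ ⁅x, η⁆)
    (hb_jacobi : ∀ ξ η ζ : M, ⁅b ξ η, ζ⁆ + ⁅b η ζ, ξ⁆ + ⁅b ζ ξ, η⁆ = 0)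
    (k₁ : Submodule ℂ M)
    (hk₁ : ∀ (x : L), ∀ η ∈ k₁, ⁅x, η⁆ ∈ k₁)
    (hdim : Module.finrank ℂ (M ⧸ k₁) = 1)
    (ξ : M) (hξ : ξ ∉ k₁)
    -- the 𝔤-module W = (W₀, W₁, σ, τ) in components
    (W₀ : Type) [AddCommGroup W₀] [Module ℂ W₀] [FiniteDimensional ℂ W₀]
    [LieRingModule L W₀] [LieModule ℂ L W₀]
    (W₁ : Type) [AddCommGroup W₁] [Module ℂ W₁] [FiniteDimensional ℂ W₁]
    [LieRingModule L W₁] [LieModule ℂ L W₁]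
    (σ : M →ₗ[ℂ] W₀ →ₗ[ℂ] W₁) (τ : M →ₗ[ℂ] W₁ →ₗ[ℂ] W₀)
    (hσ : ∀ (x : L) (η : M) (w : W₀), σ ⁅x, η⁆ w = ⁅x, σ η w⁆ - σ η ⁅x, w⁆)
    (hτ : ∀ (x : L) (η : M) (w : W₁), τ ⁅x, η⁆ w = ⁅x, τ η w⁆ - τ η ⁅x, w⁆)
    (hτσ : ∀ (η ζ : M) (w : W₀), τ ζ (σ η w) + τ η (σ ζ w) = ⁅b η ζ, w⁆)
    (hστ : ∀ (η ζ : M) (w : W₁), σ ζ (τ η w) + σ η (τ ζ w) = ⁅b η ζ, w⁆)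
    -- W is irreducible as a 𝔤-module
    (hirr : ∀ (U₀ : Submodule ℂ W₀) (U₁ : Submodule ℂ W₁),
      (∀ (x : L), ∀ w ∈ U₀, ⁅x, w⁆ ∈ U₀) → (∀ (x : L), ∀ w ∈ U₁, ⁅x, w⁆ ∈ U₁) →
      (∀ (η : M), ∀ w ∈ U₀, σ η w ∈ U₁) → (∀ (η : M), ∀ w ∈ U₁, τ η w ∈ U₀) →
      (U₀ = ⊥ ∧ U₁ = ⊥) ∨ (U₀ = ⊤ ∧ U₁ = ⊤))
    -- (V₀, V₁) is a 𝔨-submodule of W, where 𝔨 = 𝔤₀ ⊕ k₁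
    (V₀ : Submodule ℂ W₀) (V₁ : Submodule ℂ W₁)
    (hV₀L : ∀ (x : L), ∀ w ∈ V₀, ⁅x, w⁆ ∈ V₀)
    (hV₁L : ∀ (x : L), ∀ w ∈ V₁, ⁅x, w⁆ ∈ V₁)
    (hV₀σ : ∀ η ∈ k₁, ∀ w ∈ V₀, σ η w ∈ V₁)
    (hV₁τ : ∀ η ∈ k₁, ∀ w ∈ V₁, τ η w ∈ V₀)
    -- which is nonzero and proper
    (hV_ne_bot : ¬(V₀ = ⊥ ∧ V₁ = ⊥))
    (hV_ne_top : ¬(V₀ = ⊤ ∧ V₁ = ⊤))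
    -- and irreducible as a 𝔨-module
    (hVirr : ∀ (U₀ : Submodule ℂ W₀) (U₁ : Submodule ℂ W₁), U₀ ≤ V₀ → U₁ ≤ V₁ →
      (∀ (x : L), ∀ w ∈ U₀, ⁅x, w⁆ ∈ U₀) → (∀ (x : L), ∀ w ∈ U₁, ⁅x, w⁆ ∈ U₁) →
      (∀ η ∈ k₁, ∀ w ∈ U₀, σ η w ∈ U₁) → (∀ η ∈ k₁, ∀ w ∈ U₁, τ η w ∈ U₀) →
      (U₀ = ⊥ ∧ U₁ = ⊥) ∨ (U₀ = V₀ ∧ U₁ = V₁)) :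
    (V₀ ⊔ V₁.map (τ ξ) = ⊤ ∧ V₀ ⊓ V₁.map (τ ξ) = ⊥) ∧
    (V₁ ⊔ V₀.map (σ ξ) = ⊤ ∧ V₁ ⊓ V₀.map (σ ξ) = ⊥) :=
  irreducible_module_is_induced_from_codim_one_general L M b k₁ hdim ξ hξ W₀ W₁ σ τ hσ hτ hτσ hστ
    hirr V₀ V₁ hV₀L hV₁L hV₀σ hV₁τ hV_ne_bot hV_ne_top hVirr
end

section
/- Let 𝔤 be a finite-dimensional solvable Lie algebra over ℂ, W a finite-dimensional 𝔤-module, f a symmetric bilinear form on W that is 𝔤-invariant (f(x•w, w') + f(w, x•w') = 0 for all x ∈ 𝔤 and w, w' ∈ W), and V ⊆ W a 𝔤-submodule with f(V, V) = 0. Then there exists a 𝔤-submodule V' of W with V ⊆ V', f(V', V') = 0, and V' maximal among all subspaces U ⊆ W with f(U, U) = 0. -/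
/-!
Among the isotropic `𝔤`-submodules containing `V` pick a maximal one, `V'`. If some isotropic
subspace `U` strictly contains `V'`, then `U ⊆ V'^⊥` and the `𝔤`-module `V'^⊥ / V'`, with the
induced invariant form, has a nonzero isotropic vector. By Lie's theorem it then has an
isotropic common eigenvector: if a common eigenvector `v` is anisotropic, invariance forces its
weight to vanish, `v^⊥` is a nonzero submodule, and either a common eigenvector `u` of `v^⊥` is
isotropic or `c v + u` is, for `c² = -f(u,u)/f(v,v)`. The preimage of the line it spans is an
isotropic `𝔤`-submodule strictly larger than `V'`, a contradiction.
-/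

namespace LinearMap.BilinForm

variable {K M : Type*} [Field K] [AddCommGroup M] [Module K M] (Φ : LinearMap.BilinForm K M)

def IsIsotropic (U : Submodule K M) : Prop := ∀ x ∈ U, ∀ y ∈ U, Φ x y = 0

variable {Φ}

lemma isIsotropic_span_singleton {v : M} (hv : Φ v v = 0) : Φ.IsIsotropic (K ∙ v) := by
  simp only [IsIsotropic, Submodule.mem_span_singleton]
  rintro _ ⟨a, rfl⟩ _ ⟨b, rfl⟩
  simp [hv]

lemma exists_ne_zero_apply_eq_zero {v q : M} (hv : Φ v v ≠ 0) (hq : q ≠ 0) (hqq : Φ q q = 0) :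
    ∃ z ≠ 0, Φ v z = 0 := by
  -- a multiple of the projection of `q` to `v^⊥`; it vanishes only if `q ∈ K ∙ v`
  refine ⟨Φ v v • q - Φ v q • v, fun hz => ?_, by simp [mul_comm]⟩
  have hvq : Φ v q = 0 := by
    simpa [hqq] using congrArg (Φ · q) hz
  simp [hvq, hv, hq] at hz

lemma exists_isotropic_smul_add [IsAlgClosed K] (hΦ : Φ.IsRefl) {v u : M} (hv : Φ v v ≠ 0)
    (hu : u ≠ 0) (hvu : Φ v u = 0) :
    ∃ c : K, c • v + u ≠ 0 ∧ Φ (c • v + u) (c • v + u) = 0 := by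
  obtain ⟨c, hc⟩ := IsAlgClosed.exists_pow_nat_eq (-Φ u u / Φ v v) two_pos
  refine ⟨c, fun h => ?_, ?_⟩
  · have hc0 : c = 0 := by simpa [hvu, hv] using congrArg (Φ v) h
    simp [hc0, hu] at h
  · rw [eq_div_iff hv] at hc
    simp only [map_add, map_smul, LinearMap.add_apply, LinearMap.smul_apply, smul_eq_mul, hvu,
      hΦ _ _ hvu]
    linear_combination hc

end LinearMap.BilinForm

open LinearMap.BilinForm LieAlgebra.InvariantForm

section InvariantForm

variable {K L M : Type*} [Field K] [LieRing L] [AddCommGroup M] [Module K M] [LieRingModule L M]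
  {Φ : LinearMap.BilinForm K M}

lemma lie_eq_zero_of_lie_eq_smul [NeZero (2 : K)] (hΦ : Φ.lieInvariant L) {x : L} {v : M} {c : K}
    (hv : ⁅x, v⁆ = c • v) (hvv : Φ v v ≠ 0) : ⁅x, v⁆ = 0 := by
  have h := hΦ x v v
  simp only [hv, map_smul, LinearMap.smul_apply, smul_eq_mul] at h
  have hc : c = 0 := by
    have : (2 : K) * c * Φ v v = 0 := by linear_combination h
    simpa [hvv, two_ne_zero] using this
  simp [hv, hc]

lemma mem_orthogonal_of_isIsotropic {hΦ : Φ.lieInvariant L} {N : LieSubmodule K L M}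
    {U : Submodule K M} (hU : Φ.IsIsotropic U) (hNU : (N : Submodule K M) ≤ U) {u : M}
    (hu : u ∈ U) : u ∈ orthogonal Φ hΦ N :=
  (mem_orthogonal _ _ _ _).2 fun n hn => hU n (hNU hn) u hu

section OrthogonalQuotient

variable (hΦ : Φ.lieInvariant L) (N : LieSubmodule K L M)

/-- `N^⊥ / (N ∩ N^⊥)`, which is `N^⊥ / N` when `N` is isotropic. -/
abbrev OrthogonalQuot := orthogonal Φ hΦ N ⧸ N.comap (orthogonal Φ hΦ N).incl

variable (hΦr : Φ.IsRefl)

def orthogonalQuotForm : LinearMap.BilinForm K (OrthogonalQuot hΦ N) :=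
  (Φ.restrict (orthogonal Φ hΦ N)).liftQ₂ _ _
    (fun n hn => LinearMap.ext fun p => (mem_orthogonal _ _ _ _).1 p.2 n hn)
    (fun n hn => LinearMap.ext fun p => hΦr _ _ ((mem_orthogonal _ _ _ _).1 p.2 n hn))

variable {hΦ N}

lemma isRefl_orthogonalQuotForm : (orthogonalQuotForm hΦ N hΦr).IsRefl := by
  intro a b
  induction a using Submodule.Quotient.induction_on
  induction b using Submodule.Quotient.induction_on
  exact hΦr _ _

variable [LieAlgebra K L] [LieModule K L M]

lemma lieInvariant_orthogonalQuotForm : (orthogonalQuotForm hΦ N hΦr).lieInvariant L := by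
  intro x a b
  induction a using Submodule.Quotient.induction_on
  induction b using Submodule.Quotient.induction_on
  exact hΦ x _ _

end OrthogonalQuotient

variable [LieAlgebra K L] [LieModule K L M]

variable (K L M) in
theorem LieModule.exists_forall_lie_eq_smul_of_isSolvable [IsAlgClosed K] [CharZero K]
    [FiniteDimensional K M] [LieAlgebra.IsSolvable L] [Nontrivial M] :
    ∃ χ : L → K, ∃ v : M, v ≠ 0 ∧ ∀ x, ⁅x, v⁆ = χ x • v := by
  obtain ⟨χ, hχ⟩ := LieModule.exists_nontrivial_weightSpace_of_isSolvable K L M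
  obtain ⟨⟨v, hv⟩, hv0⟩ := exists_ne (0 : LieModule.weightSpace M χ)
  exact ⟨χ, v, by simpa using hv0, (LieModule.mem_weightSpace χ v).1 hv⟩

def LieSubmodule.spanEigenvector (χ : L → K) {v : M} (hv : ∀ x, ⁅x, v⁆ = χ x • v) :
    LieSubmodule K L M where
  toSubmodule := K ∙ v
  lie_mem {x w} hw := by
    obtain ⟨a, rfl⟩ := Submodule.mem_span_singleton.1 hw
    rw [lie_smul, hv, smul_smul]
    exact Submodule.smul_mem _ _ (Submodule.mem_span_singleton_self v)

@[simp]
lemma LieSubmodule.mem_spanEigenvector (χ : L → K) {v w : M} (hv : ∀ x, ⁅x, v⁆ = χ x • v) :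
    w ∈ spanEigenvector χ hv ↔ ∃ a : K, a • v = w :=
  Submodule.mem_span_singleton

theorem exists_isotropic_eigenvector [IsAlgClosed K] [CharZero K] [FiniteDimensional K M]
    [LieAlgebra.IsSolvable L] (hΦr : Φ.IsRefl) (hΦ : Φ.lieInvariant L) {q : M} (hq : q ≠ 0)
    (hqq : Φ q q = 0) :
    ∃ χ : L → K, ∃ v : M, v ≠ 0 ∧ Φ v v = 0 ∧ ∀ x, ⁅x, v⁆ = χ x • v := by
  have : Nontrivial M := ⟨q, 0, hq⟩
  obtain ⟨χ, v, hv0, hv⟩ := LieModule.exists_forall_lie_eq_smul_of_isSolvable K L M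
  by_cases hvv : Φ v v = 0
  · exact ⟨χ, v, hv0, hvv, hv⟩
  let Z := orthogonal Φ hΦ (LieSubmodule.spanEigenvector χ hv)
  have hZ (z : M) : z ∈ Z ↔ Φ v z = 0 := by
    rw [mem_orthogonal]
    refine ⟨fun h => h v ((LieSubmodule.mem_spanEigenvector χ hv).2 ⟨1, one_smul K v⟩), ?_⟩
    intro h w hw
    obtain ⟨a, rfl⟩ := (LieSubmodule.mem_spanEigenvector χ hv).1 hw
    simp [h]
  obtain ⟨z, hz0, hvz⟩ := exists_ne_zero_apply_eq_zero hvv hq hqq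
  have : Nontrivial Z := ⟨⟨z, (hZ z).2 hvz⟩, 0, by simpa using hz0⟩
  obtain ⟨χ', ⟨u, huZ⟩, hu0, hu⟩ := LieModule.exists_forall_lie_eq_smul_of_isSolvable K L Z
  replace hu0 : u ≠ 0 := by simpa using hu0
  replace hu (x : L) : ⁅x, u⁆ = χ' x • u := by simpa using congrArg Subtype.val (hu x)
  by_cases huu : Φ u u = 0
  · exact ⟨χ', u, hu0, huu, hu⟩
  obtain ⟨c, hne, hiso⟩ := exists_isotropic_smul_add hΦr hvv hu0 ((hZ u).1 huZ)
  refine ⟨0, c • v + u, hne, hiso, fun x => ?_⟩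
  simp [lie_eq_zero_of_lie_eq_smul hΦ (hv x) hvv, lie_eq_zero_of_lie_eq_smul hΦ (hu x) huu]

section Extension

variable (hΦr : Φ.IsRefl) {hΦ : Φ.lieInvariant L} {N : LieSubmodule K L M}

open LieSubmodule.Quotient

lemma isIsotropic_map_incl_comap_mk' {S : LieSubmodule K L (OrthogonalQuot hΦ N)}
    (hS : (orthogonalQuotForm hΦ N hΦr).IsIsotropic S) :
    Φ.IsIsotropic ((S.comap (mk' _)).map (orthogonal Φ hΦ N).incl) := by
  rintro _ hx _ hy
  obtain ⟨p, hp, rfl⟩ := (LieSubmodule.mem_map _).1 hx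
  obtain ⟨p', hp', rfl⟩ := (LieSubmodule.mem_map _).1 hy
  exact hS _ hp _ hp'

lemma lt_map_incl_comap_mk' (hN : N ≤ orthogonal Φ hΦ N)
    {S : LieSubmodule K L (OrthogonalQuot hΦ N)} (hS : S ≠ ⊥) :
    N < (S.comap (mk' _)).map (orthogonal Φ hΦ N).incl := by
  refine lt_of_le_not_ge (fun n hn => (LieSubmodule.mem_map _).2 ⟨⟨n, hN hn⟩, ?_, rfl⟩) ?_
  · have : mk' (N.comap (orthogonal Φ hΦ N).incl) ⟨n, hN hn⟩ = 0 := (mk_eq_zero _).2 hn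
    rw [LieSubmodule.mem_comap, this]
    exact S.zero_mem
  · obtain ⟨s, hs, hs0⟩ : ∃ s ∈ S, s ≠ 0 := by simpa [LieSubmodule.eq_bot_iff] using hS
    obtain ⟨p, rfl⟩ := surjective_mk' _ s
    intro hle
    exact hs0 ((mk_eq_zero _).2 (hle ((LieSubmodule.mem_map _).2 ⟨p, hs, rfl⟩)))

end Extension

variable [IsAlgClosed K] [CharZero K] [FiniteDimensional K M] [LieAlgebra.IsSolvable L]
  {N : LieSubmodule K L M}

theorem exists_gt_isIsotropic_of_lt (hΦr : Φ.IsRefl) (hΦ : Φ.lieInvariant L) {U : Submodule K M}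
    (hU : Φ.IsIsotropic U) (hNU : (N : Submodule K M) < U) :
    ∃ N' : LieSubmodule K L M, N < N' ∧ Φ.IsIsotropic N' := by
  obtain ⟨u, huU, huN⟩ := SetLike.exists_of_lt hNU
  let q : OrthogonalQuot hΦ N :=
    LieSubmodule.Quotient.mk ⟨u, mem_orthogonal_of_isIsotropic hU hNU.le huU⟩
  have hq : q ≠ 0 := by simpa [q] using huN
  obtain ⟨χ, v, hv0, hvv, hv⟩ := exists_isotropic_eigenvector (isRefl_orthogonalQuotForm hΦr)
    (lieInvariant_orthogonalQuotForm hΦr) hq (hU u huU u huU)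
  refine ⟨_, lt_map_incl_comap_mk' (S := LieSubmodule.spanEigenvector χ hv)
    (fun n hn => mem_orthogonal_of_isIsotropic hU hNU.le (hNU.le hn)) ?_,
    isIsotropic_map_incl_comap_mk' hΦr (isIsotropic_span_singleton hvv)⟩
  rw [Ne, LieSubmodule.eq_bot_iff]
  exact fun h => hv0 (h v ((LieSubmodule.mem_spanEigenvector χ hv).2 ⟨1, one_smul K v⟩))

theorem maximal_isIsotropic_toSubmodule (hΦr : Φ.IsRefl) (hΦ : Φ.lieInvariant L)
    (hN : Maximal (fun N' : LieSubmodule K L M => Φ.IsIsotropic N') N) :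
    Maximal Φ.IsIsotropic (N : Submodule K M) := by
  refine ⟨hN.prop, fun U hU hNU => ?_⟩
  by_contra hUN
  obtain ⟨N', hNN', hN'⟩ := exists_gt_isIsotropic_of_lt hΦr hΦ hU (lt_of_le_not_ge hNU hUN)
  exact hN.not_gt hN' hNN'

end InvariantForm

theorem exists_invariant_maximal_isotropic_general
    (L : Type) [LieRing L] [LieAlgebra ℂ L]
    [LieAlgebra.IsSolvable L]
    (W : Type) [AddCommGroup W] [Module ℂ W] [FiniteDimensional ℂ W]
    [LieRingModule L W] [LieModule ℂ L W]
    (f : W →ₗ[ℂ] W →ₗ[ℂ] ℂ)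
    (hf_symm : ∀ w w' : W, f w w' = f w' w)
    (hf_inv : ∀ (x : L) (w w' : W), f ⁅x, w⁆ w' + f w ⁅x, w'⁆ = 0)
    (V : Submodule ℂ W)
    (hV : ∀ (x : L), ∀ w ∈ V, ⁅x, w⁆ ∈ V)
    (hViso : ∀ w ∈ V, ∀ w' ∈ V, f w w' = 0) :
    ∃ V' : Submodule ℂ W,
      (∀ (x : L), ∀ w ∈ V', ⁅x, w⁆ ∈ V') ∧
      V ≤ V' ∧
      (∀ w ∈ V', ∀ w' ∈ V', f w w' = 0) ∧
      (∀ U : Submodule ℂ W, (∀ w ∈ U, ∀ w' ∈ U, f w w' = 0) → V' ≤ U → U = V') := by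
  have hfr : f.IsRefl := fun w w' h => hf_symm w w' ▸ h
  have hfi : lieInvariant L f := fun x w w' => eq_neg_of_add_eq_zero_left (hf_inv x w w')
  let V₀ : LieSubmodule ℂ L W := { V with lie_mem := fun {x w} hw => hV x w hw }
  obtain ⟨V', hV₀V', hV'⟩ :=
    exists_maximal_ge_of_wellFoundedGT (fun N : LieSubmodule ℂ L W => IsIsotropic f N) V₀ hViso
  have hmax := maximal_isIsotropic_toSubmodule hfr hfi hV'
  exact ⟨V', fun x w hw => V'.lie_mem hw, hV₀V', hmax.prop, fun U hU hle => hmax.eq_of_ge hU hle⟩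

/-- Let `𝔤` be a finite-dimensional solvable Lie algebra over `ℂ`,
`W` a finite-dimensional `𝔤`-module, `f` a `𝔤`-invariant symmetric bilinear form on
`W`, and `V ⊆ W` an isotropic `𝔤`-submodule.  Then there is a `𝔤`-submodule
`V' ⊇ V` of `W` which is isotropic and maximal among all isotropic subspaces of
`W`. -/
theorem exists_invariant_maximal_isotropic
    (L : Type) [LieRing L] [LieAlgebra ℂ L] [FiniteDimensional ℂ L]
    [LieAlgebra.IsSolvable L]
    (W : Type) [AddCommGroup W] [Module ℂ W] [FiniteDimensional ℂ W]
    [LieRingModule L W] [LieModule ℂ L W]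
    (f : W →ₗ[ℂ] W →ₗ[ℂ] ℂ)
    (hf_symm : ∀ w w' : W, f w w' = f w' w)
    (hf_inv : ∀ (x : L) (w w' : W), f ⁅x, w⁆ w' + f w ⁅x, w'⁆ = 0)
    (V : Submodule ℂ W)
    (hV : ∀ (x : L), ∀ w ∈ V, ⁅x, w⁆ ∈ V)
    (hViso : ∀ w ∈ V, ∀ w' ∈ V, f w w' = 0) :
    ∃ V' : Submodule ℂ W,
      (∀ (x : L), ∀ w ∈ V', ⁅x, w⁆ ∈ V') ∧
      V ≤ V' ∧
      (∀ w ∈ V', ∀ w' ∈ V', f w w' = 0) ∧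
      (∀ U : Submodule ℂ W, (∀ w ∈ U, ∀ w' ∈ U, f w w' = 0) → V' ≤ U → U = V') :=
  exists_invariant_maximal_isotropic_general L W f hf_symm hf_inv V hV hViso
end

section
/- Let 𝔤 = 𝔤₀ ⊕ 𝔤₁ be a Lie superalgebra over ℂ encoded in components, with 𝔤₀ solvable, and let λ : 𝔤₀ → ℂ be a linear functional with λ(⁅𝔤₀,𝔤₀⁆) = 0. Then there exists a polarization for λ, i.e. a 𝔤₀-submodule 𝔭 ⊆ 𝔤₁ with f_λ(𝔭,𝔭) = 0 that is maximal among all subspaces U ⊆ 𝔤₁ with f_λ(U,U) = 0. -/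
/-!
The form `f(ξ, η) = l (b ξ η)` is symmetric and `𝔤₀`-invariant, so it suffices to show that a
`𝔤₀`-submodule `p` maximal among the isotropic ones is maximal among all isotropic subspaces.
An isotropic `U ⊋ p` lies in `p^⊥` and meets `p^⊥ \ p` in an isotropic vector `q`. Lie's theorem
applied to `N / p`, for `N = p^⊥`, gives `v ∈ N \ p` spanning an invariant line modulo `p`.
If `v` is isotropic, `p + ℂ v` contradicts maximality. Otherwise invariance forces `v` to have
weight zero, so `W = N ∩ v^⊥` is a smaller invariant subspace containing `p`: either `W \ p`
contains an isotropic vector and we recurse into `W`, or `W / p` is an anisotropic line, on which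
`𝔤₀` then acts by zero; in that case `p + ℂ q` is invariant and contradicts maximality.
-/

open LinearMap (BilinForm)

namespace LinearMap.BilinForm

variable {K M : Type*} [Field K] [AddCommGroup M] [Module K M] {B : BilinForm K M}

lemma exists_isotropic_add_smul [IsAlgClosed K] (hS : B.IsSymm) (a : M) {b : M}
    (hb : B b b ≠ 0) : ∃ t : K, B (a + t • b) (a + t • b) = 0 := by
  obtain ⟨s, hs⟩ := IsAlgClosed.exists_pow_nat_eq (B a b ^ 2 - B a a * B b b) two_pos
  refine ⟨(s - B a b) / B b b, ?_⟩
  simp only [map_add, map_smul, LinearMap.add_apply, LinearMap.smul_apply, smul_eq_mul,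
    hS.eq b a]
  field_simp
  linear_combination hs

lemma apply_lie_self {L : Type*} [LieRing L] [LieRingModule L M] [CharZero K] (hS : B.IsSymm)
    (hB : B.lieInvariant L) (x : L) (v : M) : B ⁅x, v⁆ v = 0 := by
  have h := hB x v v
  rwa [hS.eq v, CharZero.eq_neg_self_iff] at h

end LinearMap.BilinForm

namespace LieModule

open LinearMap.BilinForm

variable {K L M : Type*} [Field K] [LieRing L] [AddCommGroup M] [Module K M] [LieRingModule L M]
  {B : BilinForm K M}

lemma lie_mem_of_lie_sub_smul_mem [CharZero K] (hS : B.IsSymm) (hB : B.lieInvariant L)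
    {p : LieSubmodule K L M} {v : M} (hpv : ∀ y ∈ p, B y v = 0) (hvv : B v v ≠ 0) {x : L} {c : K}
    (h : ⁅x, v⁆ - c • v ∈ p) : ⁅x, v⁆ ∈ p := by
  have hc : c * B v v = 0 := by
    simpa [apply_lie_self hS hB] using hpv _ h
  obtain rfl : c = 0 := (mul_eq_zero.mp hc).resolve_right hvv
  simpa using h

lemma lie_mem_of_forall_isotropic_mem [CharZero K] [IsAlgClosed K] (hS : B.IsSymm)
    (hB : B.lieInvariant L) {p W : LieSubmodule K L M} (hpW : ∀ y ∈ p, ∀ z ∈ W, B y z = 0)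
    (hW : ∀ z ∈ W, B z z = 0 → z ∈ p) {w : M} (hw : w ∈ W) (x : L) : ⁅x, w⁆ ∈ p := by
  by_cases hwp : w ∈ p
  · exact p.lie_mem hwp
  have hww : B w w ≠ 0 := fun h => hwp (hW w hw h)
  obtain ⟨t, ht⟩ := exists_isotropic_add_smul hS ⁅x, w⁆ hww
  have hmem : ⁅x, w⁆ - (-t) • w ∈ p := by
    rw [neg_smul, sub_neg_eq_add]
    exact hW _ (W.add_mem (W.lie_mem hw) (W.smul_mem t hw)) ht
  exact lie_mem_of_lie_sub_smul_mem hS hB (fun y hy => hpW y hy w hw) hww hmem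

variable [LieAlgebra K L] [LieModule K L M]

lemma exists_isotropic_gt_of_lie_sub_smul_mem (hS : B.IsSymm) {p : LieSubmodule K L M}
    (hp : ∀ y ∈ p, ∀ z ∈ p, B y z = 0) {v : M} (hvp : v ∉ p) (hvv : B v v = 0)
    (hpv : ∀ y ∈ p, B y v = 0) (χ : L → K) (hv : ∀ x : L, ⁅x, v⁆ - χ x • v ∈ p) :
    ∃ p' : LieSubmodule K L M, p < p' ∧ ∀ y ∈ p', ∀ z ∈ p', B y z = 0 := by
  let p' : LieSubmodule K L M :=
    { (p : Submodule K M) ⊔ K ∙ v with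
      lie_mem := by
        intro x m hm
        obtain ⟨y, hy, z, hz, rfl⟩ := Submodule.mem_sup.mp hm
        obtain ⟨t, rfl⟩ := Submodule.mem_span_singleton.mp hz
        refine Submodule.mem_sup.mpr ⟨⁅x, y⁆ + t • (⁅x, v⁆ - χ x • v),
          p.add_mem (p.lie_mem hy) (p.smul_mem t (hv x)), (t * χ x) • v,
          Submodule.smul_mem _ _ (Submodule.mem_span_singleton_self v), ?_⟩
        rw [lie_add, lie_smul]
        module }
  have hmem : ∀ m ∈ p', ∃ y ∈ p, ∃ t : K, y + t • v = m := fun m hm => by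
    obtain ⟨y, hy, z, hz, rfl⟩ := Submodule.mem_sup.mp hm
    obtain ⟨t, rfl⟩ := Submodule.mem_span_singleton.mp hz
    exact ⟨y, hy, t, rfl⟩
  refine ⟨p', SetLike.lt_iff_le_and_exists.mpr ⟨fun y hy => Submodule.mem_sup_left hy,
    v, Submodule.mem_sup_right (Submodule.mem_span_singleton_self v), hvp⟩, ?_⟩
  rintro _ hm _ hm'
  obtain ⟨y, hy, s, rfl⟩ := hmem _ hm
  obtain ⟨z, hz, t, rfl⟩ := hmem _ hm'
  simp [hp y hy z hz, hpv y hy, hS.eq v z, hpv z hz, hvv]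

variable [CharZero K] [IsAlgClosed K] [LieAlgebra.IsSolvable L] [FiniteDimensional K M]

lemma exists_forall_lie_sub_smul_mem {p N : LieSubmodule K L M} (hpN : p < N) :
    ∃ v ∈ N, v ∉ p ∧ ∃ χ : L → K, ∀ x : L, ⁅x, v⁆ - χ x • v ∈ p := by
  let π := LieSubmodule.Quotient.mk' p
  have : Nontrivial (N.map π) := by
    obtain ⟨q, hqN, hqp⟩ := SetLike.exists_of_lt hpN
    refine nontrivial_of_ne ⟨π q, LieSubmodule.mem_map_of_mem hqN⟩ 0 ?_
    simpa [Subtype.ext_iff, π, LieSubmodule.Quotient.mk_eq_zero'] using hqp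
  obtain ⟨χ, hχ⟩ := exists_nontrivial_weightSpace_of_isSolvable K L (N.map π)
  obtain ⟨⟨⟨w, hwN⟩, hw⟩, hw0⟩ := exists_ne (0 : weightSpace (N.map π) χ)
  obtain ⟨v, hvN, rfl⟩ := (LieSubmodule.mem_map _).mp hwN
  refine ⟨v, hvN, ?_, χ, fun x => ?_⟩
  · simpa [π, LieSubmodule.Quotient.mk_eq_zero'] using hw0
  · rw [← LieSubmodule.Quotient.mk_eq_zero']
    change π (⁅x, v⁆ - χ x • v) = 0
    rw [map_sub, map_smul, LieModuleHom.map_lie, sub_eq_zero]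
    simpa [Subtype.ext_iff] using (mem_weightSpace _ _).mp hw x

theorem exists_isotropic_gt (hS : B.IsSymm) (hB : B.lieInvariant L) {p N : LieSubmodule K L M}
    (hpN : p ≤ N) (hN : ∀ y ∈ p, ∀ z ∈ N, B y z = 0) {q : M} (hqN : q ∈ N) (hqp : q ∉ p)
    (hqq : B q q = 0) :
    ∃ p' : LieSubmodule K L M, p < p' ∧ ∀ y ∈ p', ∀ z ∈ p', B y z = 0 := by
  have := LieSubmodule.wellFoundedLT_of_isArtinian K L M
  induction N using WellFoundedLT.induction generalizing q with
  | _ N ih =>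
  have hp : ∀ y ∈ p, ∀ z ∈ p, B y z = 0 := fun y hy z hz => hN y hy z (hpN hz)
  obtain ⟨v, hvN, hvp, χ, hχ⟩ :=
    exists_forall_lie_sub_smul_mem (lt_of_le_of_ne hpN fun h => hqp (h ▸ hqN))
  by_cases hvv : B v v = 0
  · exact exists_isotropic_gt_of_lie_sub_smul_mem hS hp hvp hvv (fun y hy => hN y hy v hvN) χ hχ
  have hv : ∀ x : L, ⁅x, v⁆ ∈ p := fun x =>
    lie_mem_of_lie_sub_smul_mem hS hB (fun y hy => hN y hy v hvN) hvv (hχ x)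
  let W : LieSubmodule K L M :=
    { (N : Submodule K M) ⊓ LinearMap.ker (B v) with
      lie_mem := by
        rintro x m ⟨hmN, hmv⟩
        refine ⟨N.lie_mem hmN, ?_⟩
        simp only [SetLike.mem_coe, LinearMap.mem_ker] at hmv ⊢
        rw [← neg_eq_zero, ← hB, hN _ (hv x) m hmN] }
  have hWN : W < N :=
    SetLike.lt_iff_le_and_exists.mpr ⟨fun m hm => hm.1, v, hvN, fun h => hvv h.2⟩
  have hpW : p ≤ W := fun y hy => ⟨hpN hy, by simp [hS.eq v y, hN y hy v hvN]⟩
  by_cases hiso : ∃ z ∈ W, z ∉ p ∧ B z z = 0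
  · obtain ⟨z, hzW, hzp, hzz⟩ := hiso
    exact ih W hWN hpW (fun y hy z hz => hN y hy z (hWN.le hz)) hzW hzp hzz
  push Not at hiso
  set c := B v q / B v v
  have hwW : q - c • v ∈ W := ⟨N.sub_mem hqN (N.smul_mem c hvN), by
    simp only [SetLike.mem_coe, LinearMap.mem_ker, map_sub, map_smul, smul_eq_mul, c]
    field_simp; ring⟩
  refine exists_isotropic_gt_of_lie_sub_smul_mem hS hp hqp hqq (fun y hy => hN y hy q hqN) 0
    fun x => ?_
  have hqw := lie_mem_of_forall_isotropic_mem hS hB (fun y hy z hz => hN y hy z (hWN.le hz))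
    (fun z hz hzz => by_contra fun hzp => hiso z hz hzp hzz) hwW x
  have hq : ⁅x, q⁆ = ⁅x, q - c • v⁆ + c • ⁅x, v⁆ := by rw [lie_sub, lie_smul, sub_add_cancel]
  rw [Pi.zero_apply, zero_smul, sub_zero, hq]
  exact p.add_mem hqw (p.smul_mem c (hv x))

theorem exists_isotropic_lieSubmodule_maximal (hS : B.IsSymm) (hB : B.lieInvariant L) :
    ∃ p : LieSubmodule K L M, (∀ y ∈ p, ∀ z ∈ p, B y z = 0) ∧
      ∀ U : Submodule K M, (∀ y ∈ U, ∀ z ∈ U, B y z = 0) → (p : Submodule K M) ≤ U → U = p := by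
  obtain ⟨p, hp, hmax⟩ := wellFounded_gt.has_min
    {p : LieSubmodule K L M | ∀ y ∈ p, ∀ z ∈ p, B y z = 0} ⟨⊥, by simp⟩
  refine ⟨p, hp, fun U hU hpU => le_antisymm (fun q hqU => ?_) hpU⟩
  by_contra hqp
  have hpN : p ≤ LieAlgebra.InvariantForm.orthogonal B hB p := fun y hy =>
    (LieAlgebra.InvariantForm.mem_orthogonal B hB p y).mpr fun z hz => hp z hz y hy
  obtain ⟨p', hpp', hp'⟩ := exists_isotropic_gt hS hB hpN
    (fun y hy z hz => (LieAlgebra.InvariantForm.mem_orthogonal B hB p z).mp hz y hy)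
    ((LieAlgebra.InvariantForm.mem_orthogonal B hB p q).mpr fun y hy => hU y (hpU hy) q hqU)
    hqp (hU q hqU q hqU)
  exact hmax p' hp' hpp'

end LieModule

theorem exists_polarization_general
    (L : Type) [LieRing L] [LieAlgebra ℂ L]
    [LieAlgebra.IsSolvable L]
    (M : Type) [AddCommGroup M] [Module ℂ M] [FiniteDimensional ℂ M]
    [LieRingModule L M] [LieModule ℂ L M]
    (b : M →ₗ[ℂ] M →ₗ[ℂ] L)
    (hb_symm : ∀ ξ η : M, b ξ η = b η ξ)
    (hb_equivariant : ∀ (x : L) (ξ η : M), ⁅x, b ξ η⁆ = b ⁅x, ξ⁆ η + b ξ ⁅x, η⁆)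
    (l : L →ₗ[ℂ] ℂ)
    (hl : ∀ x y : L, l ⁅x, y⁆ = 0) :
    ∃ p : Submodule ℂ M,
      (∀ (x : L), ∀ ξ ∈ p, ⁅x, ξ⁆ ∈ p) ∧
      (∀ ξ ∈ p, ∀ η ∈ p, l (b ξ η) = 0) ∧
      (∀ U : Submodule ℂ M, (∀ ξ ∈ U, ∀ η ∈ U, l (b ξ η) = 0) → p ≤ U → U = p) := by
  let f : BilinForm ℂ M := b.compr₂ l
  have hS : f.IsSymm := ⟨fun ξ η => by simp [f, hb_symm ξ η]⟩
  have hB : f.lieInvariant L := fun x ξ η => by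
    have h := hl x (b ξ η)
    rw [hb_equivariant, map_add] at h
    exact eq_neg_of_add_eq_zero_left h
  obtain ⟨p, hp, hmax⟩ := LieModule.exists_isotropic_lieSubmodule_maximal hS hB
  exact ⟨p, fun x ξ hξ => p.lie_mem hξ, hp, hmax⟩

/-- **existence of polarizations.** Let `𝔤 = 𝔤₀ ⊕ 𝔤₁` be a Lie
superalgebra over `ℂ` encoded in components (`L` is `𝔤₀`, `M` is `𝔤₁`, `b` the
bracket of two odd elements), with `𝔤₀` solvable, and let `l : 𝔤₀ → ℂ` be a linear
functional vanishing on `⁅𝔤₀,𝔤₀⁆`.  Then there exists a polarization for `l`: a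
`𝔤₀`-submodule `p ⊆ 𝔤₁` with `f_l(p,p) = 0` (where `f_l(ξ,η) = l(b(ξ,η))`), which is
maximal among all subspaces `U ⊆ 𝔤₁` with `f_l(U,U) = 0`. -/
theorem exists_polarization
    (L : Type) [LieRing L] [LieAlgebra ℂ L] [FiniteDimensional ℂ L]
    [LieAlgebra.IsSolvable L]
    (M : Type) [AddCommGroup M] [Module ℂ M] [FiniteDimensional ℂ M]
    [LieRingModule L M] [LieModule ℂ L M]
    (b : M →ₗ[ℂ] M →ₗ[ℂ] L)
    (hb_symm : ∀ ξ η : M, b ξ η = b η ξ)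
    (hb_equivariant : ∀ (x : L) (ξ η : M), ⁅x, b ξ η⁆ = b ⁅x, ξ⁆ η + b ξ ⁅x, η⁆)
    (hb_jacobi : ∀ ξ η ζ : M, ⁅b ξ η, ζ⁆ + ⁅b η ζ, ξ⁆ + ⁅b ζ ξ, η⁆ = 0)
    (l : L →ₗ[ℂ] ℂ)
    (hl : ∀ x y : L, l ⁅x, y⁆ = 0) :
    ∃ p : Submodule ℂ M,
      (∀ (x : L), ∀ ξ ∈ p, ⁅x, ξ⁆ ∈ p) ∧
      (∀ ξ ∈ p, ∀ η ∈ p, l (b ξ η) = 0) ∧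
      (∀ U : Submodule ℂ M, (∀ ξ ∈ U, ∀ η ∈ U, l (b ξ η) = 0) → p ≤ U → U = p) :=
  exists_polarization_general L M b hb_symm hb_equivariant l hl
end

section
/- Let 𝔤 = 𝔤₀ ⊕ 𝔤₁ be a Lie superalgebra over ℂ encoded in components, and let 𝔭 ⊆ 𝔤₁ be any 𝔤₀-submodule. Then the functional θ_𝔭 vanishes on all brackets of the subalgebra 𝔥 = 𝔤₀ ⊕ 𝔭: namely θ_𝔭(⁅x,y⁆) = 0 for all x, y ∈ 𝔤₀, and θ_𝔭(b(p,q)) = 0 for all p, q ∈ 𝔭 (equivalently, the trace of the action of b(p,q) induced on the quotient module 𝔤₁/𝔭 is zero). -/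
/-- For a `𝔤₀`-submodule `p ⊆ 𝔤₁` and `x ∈ 𝔤₀` leaving `p` invariant,
`θ_p(x) = -(1/2) · tr(x on 𝔤₁/p)`: minus one half of the trace of the action of `x`
induced on the quotient module `𝔤₁/p` (which equals one half of the supertrace of
`ad x` on `𝔤/(𝔤₀ ⊕ p)`). -/
noncomputable def theta {L M : Type} [LieRing L] [LieAlgebra ℂ L]
    [AddCommGroup M] [Module ℂ M] [LieRingModule L M] [LieModule ℂ L M]
    (p : Submodule ℂ M) (x : L) (hx : ∀ ξ ∈ p, ⁅x, ξ⁆ ∈ p) : ℂ :=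
  -(1 / 2 : ℂ) * LinearMap.trace ℂ (M ⧸ p)
    (Submodule.mapQ p p (LieModule.toEnd ℂ L M x) (fun ξ hξ => hx ξ hξ))

/-!
An invariant submodule `p` makes `M ⧸ p` a Lie module, so `x ↦ tr(x on M ⧸ p)` is the trace of a
Lie algebra representation and kills every bracket `⁅x, y⁆`. For `q, r ∈ p` the odd Jacobi
identity gives `⁅b q r, η⁆ = -⁅b r η, q⁆ - ⁅b η q, r⁆ ∈ p` for every `η`, so `b q r` acts by zero
on `M ⧸ p` and its trace vanishes as well.
-/

open LieModule

theorem Submodule.mapQ_eq_zero_of_range_le {R M : Type*} [Ring R] [AddCommGroup M] [Module R M]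
    {p : Submodule R M} {f : M →ₗ[R] M} (hf : p ≤ p.comap f) (h : LinearMap.range f ≤ p) :
    p.mapQ p f hf = 0 :=
  Submodule.linearMap_qext _ <| LinearMap.ext fun m ↦
    (Submodule.Quotient.mk_eq_zero p).mpr (h ⟨m, rfl⟩)

theorem trace_mapQ_toEnd_lie {R L M : Type*} [CommRing R] [LieRing L] [LieAlgebra R L]
    [AddCommGroup M] [Module R M] [LieRingModule L M] [LieModule R L M]
    {p : Submodule R M} (hp : ∀ (x : L), ∀ m ∈ p, ⁅x, m⁆ ∈ p) (x y : L) :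
    LinearMap.trace R (M ⧸ p) (p.mapQ p (toEnd R L M ⁅x, y⁆) (hp ⁅x, y⁆)) = 0 := by
  let N : LieSubmodule R L M := { p with lie_mem := hp _ _ }
  -- The Lie module structure of `M ⧸ N` acts through `mapQ`, so this is a definitional change.
  change LinearMap.trace R (M ⧸ N) (toEnd R L (M ⧸ N) ⁅x, y⁆) = 0
  simp only [LieHom.map_lie, LinearMap.trace_lie]

theorem lie_odd_bracket_mem {R L M : Type*} [CommRing R] [LieRing L] [Module R L]
    [AddCommGroup M] [Module R M] [LieRingModule L M] (b : M →ₗ[R] M →ₗ[R] L)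
    (hb_jacobi : ∀ ξ η ζ : M, ⁅b ξ η, ζ⁆ + ⁅b η ζ, ξ⁆ + ⁅b ζ ξ, η⁆ = 0)
    {p : Submodule R M} (hp : ∀ (x : L), ∀ m ∈ p, ⁅x, m⁆ ∈ p)
    {q r : M} (hq : q ∈ p) (hr : r ∈ p) (η : M) : ⁅b q r, η⁆ ∈ p := by
  have h : ⁅b q r, η⁆ = -⁅b r η, q⁆ - ⁅b η q, r⁆ := by
    linear_combination (norm := module) hb_jacobi r η q
  rw [h]
  exact sub_mem (neg_mem (hp _ q hq)) (hp _ r hr)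

theorem theta_vanishes_on_brackets_general
    (L : Type) [LieRing L] [LieAlgebra ℂ L]
    (M : Type) [AddCommGroup M] [Module ℂ M]
    [LieRingModule L M] [LieModule ℂ L M]
    (b : M →ₗ[ℂ] M →ₗ[ℂ] L)
    (hb_jacobi : ∀ ξ η ζ : M, ⁅b ξ η, ζ⁆ + ⁅b η ζ, ξ⁆ + ⁅b ζ ξ, η⁆ = 0)
    (p : Submodule ℂ M)
    (hp : ∀ (x : L), ∀ ξ ∈ p, ⁅x, ξ⁆ ∈ p) :
    (∀ x y : L, theta p ⁅x, y⁆ (hp ⁅x, y⁆) = 0) ∧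
    (∀ q ∈ p, ∀ r ∈ p, theta p (b q r) (hp (b q r)) = 0) := by
  refine ⟨fun x y ↦ ?_, fun q hq r hr ↦ ?_⟩
  · rw [theta, trace_mapQ_toEnd_lie hp, mul_zero]
  · have hzero : p.mapQ p (toEnd ℂ L M (b q r)) (hp (b q r)) = 0 :=
      Submodule.mapQ_eq_zero_of_range_le _ <| by
        rintro _ ⟨η, rfl⟩
        exact lie_odd_bracket_mem b hb_jacobi hp hq hr η
    rw [theta, hzero, map_zero, mul_zero]

/-- Let `𝔤 = 𝔤₀ ⊕ 𝔤₁` be a Lie superalgebra over `ℂ` encoded in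
components (`L` is `𝔤₀`, `M` is `𝔤₁`, `b` the bracket of two odd elements), and let
`p ⊆ 𝔤₁` be any `𝔤₀`-submodule.  Then the functional `θ_p` vanishes on all brackets
of the subalgebra `𝔥 = 𝔤₀ ⊕ p`: namely `θ_p(⁅x,y⁆) = 0` for all `x y ∈ 𝔤₀` and
`θ_p(b(q,r)) = 0` for all `q r ∈ p`. -/
theorem theta_vanishes_on_brackets
    (L : Type) [LieRing L] [LieAlgebra ℂ L] [FiniteDimensional ℂ L]
    (M : Type) [AddCommGroup M] [Module ℂ M] [FiniteDimensional ℂ M]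
    [LieRingModule L M] [LieModule ℂ L M]
    (b : M →ₗ[ℂ] M →ₗ[ℂ] L)
    (hb_symm : ∀ ξ η : M, b ξ η = b η ξ)
    (hb_equivariant : ∀ (x : L) (ξ η : M), ⁅x, b ξ η⁆ = b ⁅x, ξ⁆ η + b ξ ⁅x, η⁆)
    (hb_jacobi : ∀ ξ η ζ : M, ⁅b ξ η, ζ⁆ + ⁅b η ζ, ξ⁆ + ⁅b ζ ξ, η⁆ = 0)
    (p : Submodule ℂ M)
    (hp : ∀ (x : L), ∀ ξ ∈ p, ⁅x, ξ⁆ ∈ p) :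
    (∀ x y : L, theta p ⁅x, y⁆ (hp ⁅x, y⁆) = 0) ∧
    (∀ q ∈ p, ∀ r ∈ p, theta p (b q r) (hp (b q r)) = 0) :=
  theta_vanishes_on_brackets_general L M b hb_jacobi p hp
end

section
/- Let 𝔤 = 𝔤₀ ⊕ 𝔤₁ be a Lie superalgebra over ℂ encoded in components, with 𝔤₀ solvable. Let λ : 𝔤₀ → ℂ vanish on ⁅𝔤₀,𝔤₀⁆, let 𝔭 and 𝔮 be polarizations for λ, and let F be a 𝔤₀-submodule with 𝔭 ∩ 𝔮 ⊆ F ⊆ 𝔭. Let F^⊥ = { ξ ∈ 𝔤₁ : f_λ(ξ, F) = 0 }. Then R = F + (F^⊥ ∩ 𝔮) is a polarization for λ. -/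
/-!
For the symmetric form `B(ξ, η) = λ(b(ξ, η))`, the subspace `R = F + (F^⊥ ∩ 𝔮)` is isotropic
because `F ⊆ 𝔭` is. For an isotropic `U ⊇ R`, maximality of `𝔮` gives `U ∩ 𝔮^⊥ = R ∩ 𝔮^⊥`, and
`R ⊇ F^⊥ ∩ 𝔮` gives `𝔮 ∩ U^⊥ = 𝔮 ∩ R^⊥`. The rank identity
`dim U + dim (W ∩ U^⊥) = dim W + dim (U ∩ W^⊥)`, which expresses that the pairing `U × W → ℂ`
and its transpose have the same rank, applied to `(U, 𝔮)` and `(R, 𝔮)` then yields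
`dim U = dim R`.
-/

/-- The orthogonal complement `F^⊥ = {ξ ∈ 𝔤₁ : f_l(ξ, F) = 0}` of a subspace
`F ⊆ 𝔤₁` with respect to the symmetric bilinear form `f_l(ξ,η) = l(b(ξ,η))`. -/
def fPerp {L M : Type} [LieRing L] [LieAlgebra ℂ L] [AddCommGroup M] [Module ℂ M]
    (l : L →ₗ[ℂ] ℂ) (b : M →ₗ[ℂ] M →ₗ[ℂ] L) (F : Submodule ℂ M) : Submodule ℂ M where
  carrier := {ξ : M | ∀ η ∈ F, l (b ξ η) = 0}
  zero_mem' := by intro η hη; simp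
  add_mem' := by intro ξ ξ' hξ hξ' η hη; simp [hξ η hη, hξ' η hη]
  smul_mem' := by intro c ξ hξ η hη; simp [hξ η hη]

open Module Submodule LinearMap
open LinearMap (BilinForm)

theorem Submodule.finrank_comap_subtype {R M : Type*} [Ring R] [AddCommGroup M] [Module R M]
    (A P : Submodule R M) : finrank R (P.comap A.subtype) = finrank R ↥(A ⊓ P) := by
  rw [← finrank_map_subtype_eq, map_comap_subtype]

namespace LinearMap

theorem ker_domRestrict₁₂ {R M₁ M₂ N : Type*} [CommSemiring R] [AddCommMonoid M₁]
    [Module R M₁] [AddCommMonoid M₂] [Module R M₂] [AddCommMonoid N] [Module R N]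
    (B : M₁ →ₗ[R] M₂ →ₗ[R] N) (U : Submodule R M₁) (W : Submodule R M₂) :
    ker (B.domRestrict₁₂ U W) = (W.orthogonalBilin B.flip).comap U.subtype := by
  ext u
  simp only [mem_ker, mem_comap, mem_orthogonalBilin_iff, flip_apply, subtype_apply]
  exact ⟨fun h w hw => congrArg (· ⟨w, hw⟩) h, fun h => ext fun w => h w w.2⟩

variable {K V₁ V₂ : Type*} [Field K] [AddCommGroup V₁] [Module K V₁]
  [AddCommGroup V₂] [Module K V₂]

theorem finrank_range_flip [FiniteDimensional K V₂] (B : V₁ →ₗ[K] V₂ →ₗ[K] K) :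
    finrank K (range B.flip) = finrank K (range B) := by
  have hflip : B.flip = B.dualMap ∘ₗ (Module.evalEquiv K V₂).toLinearMap := rfl
  rw [hflip, range_comp_of_range_eq_top _ (LinearEquiv.range _),
    finrank_range_dualMap_eq_finrank_range]

theorem finrank_add_finrank_inf_orthogonalBilin [FiniteDimensional K V₁]
    [FiniteDimensional K V₂] (B : V₁ →ₗ[K] V₂ →ₗ[K] K) (U : Submodule K V₁)
    (W : Submodule K V₂) :
    finrank K U + finrank K ↥(W ⊓ U.orthogonalBilin B) =
      finrank K W + finrank K ↥(U ⊓ W.orthogonalBilin B.flip) := by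
  have hflip : (B.domRestrict₁₂ U W).flip = B.flip.domRestrict₁₂ W U := rfl
  have hU := finrank_range_add_finrank_ker (B.domRestrict₁₂ U W)
  have hW := finrank_range_add_finrank_ker (B.flip.domRestrict₁₂ W U)
  rw [ker_domRestrict₁₂, finrank_comap_subtype] at hU
  rw [ker_domRestrict₁₂, flip_flip, finrank_comap_subtype, ← hflip, finrank_range_flip] at hW
  omega

end LinearMap

namespace LinearMap.BilinForm

theorem le_orthogonal_compr₂_iff {R M N : Type*} [CommRing R] [AddCommGroup M] [Module R M]
    [AddCommGroup N] [Module R N] (b : M →ₗ[R] M →ₗ[R] N) (l : N →ₗ[R] R)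
    (U : Submodule R M) :
    U ≤ BilinForm.orthogonal (b.compr₂ l) U ↔ ∀ ξ ∈ U, ∀ η ∈ U, l (b ξ η) = 0 :=
  ⟨fun h ξ hξ η hη => h hη ξ hξ, fun h η hη ξ hξ => h ξ hξ η hη⟩

variable {K M : Type*} [Field K] [AddCommGroup M] [Module K M] {B : BilinForm K M}

theorem orthogonal_sup (U V : Submodule K M) :
    B.orthogonal (U ⊔ V) = B.orthogonal U ⊓ B.orthogonal V := by
  refine le_antisymm (le_inf (orthogonal_le le_sup_left) (orthogonal_le le_sup_right)) ?_
  rintro x ⟨hxU, hxV⟩ y hy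
  obtain ⟨u, hu, v, hv, rfl⟩ := mem_sup.mp hy
  rw [map_add, LinearMap.add_apply, hxU u hu, hxV v hv, add_zero]

theorem sup_le_orthogonal_sup (hB : B.IsRefl) {U V : Submodule K M}
    (hU : U ≤ B.orthogonal U) (hV : V ≤ B.orthogonal V) (hUV : V ≤ B.orthogonal U) :
    U ⊔ V ≤ B.orthogonal (U ⊔ V) := by
  have hVU : U ≤ B.orthogonal V := fun u hu v hv => hB _ _ (hUV hv u hu)
  rw [orthogonal_sup]
  exact sup_le (le_inf hU hVU) (le_inf hUV hV)

theorem span_singleton_le_orthogonal_span_singleton {x : M} (hx : B x x = 0) :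
    K ∙ x ≤ B.orthogonal (K ∙ x) := by
  simp only [span_singleton_le_iff_mem, mem_orthogonal_iff, mem_span_singleton]
  rintro _ ⟨t, rfl⟩
  rw [map_smul, smul_apply, hx, smul_zero]

theorem finrank_add_finrank_inf_orthogonal [FiniteDimensional K M] (hB : B.IsSymm)
    (U W : Submodule K M) :
    finrank K U + finrank K ↥(W ⊓ B.orthogonal U) =
      finrank K W + finrank K ↥(U ⊓ B.orthogonal W) := by
  have hflip : LinearMap.flip B = B := isSymm_iff_flip.mp hB
  have := finrank_add_finrank_inf_orthogonalBilin B U W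
  rwa [hflip] at this

theorem mem_of_mem_orthogonal_of_maximal (hB : B.IsSymm) {q : Submodule K M}
    (hq : Maximal (fun U => U ≤ B.orthogonal U) q) {x : M} (hxq : x ∈ B.orthogonal q)
    (hx : B x x = 0) : x ∈ q := by
  have hiso := sup_le_orthogonal_sup hB.isRefl hq.1
    (span_singleton_le_orthogonal_span_singleton hx) (span_singleton_le_iff_mem _ _ |>.mpr hxq)
  exact hq.2 hiso le_sup_left (mem_sup_right (mem_span_singleton_self x))

theorem maximal_sup_orthogonal_inf [FiniteDimensional K M] (hB : B.IsSymm)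
    {q F : Submodule K M} (hq : Maximal (fun U => U ≤ B.orthogonal U) q)
    (hF : F ≤ B.orthogonal F) :
    Maximal (fun U => U ≤ B.orthogonal U) (F ⊔ (B.orthogonal F ⊓ q)) := by
  set R := F ⊔ (B.orthogonal F ⊓ q)
  have hperp_le : B.orthogonal F ⊓ q ≤ R := le_sup_right
  refine ⟨sup_le_orthogonal_sup hB.isRefl hF ?_ inf_le_left, fun U hU hRU => ?_⟩
  · exact (inf_le_right.trans hq.1).trans (orthogonal_le inf_le_right)
  have hUq : U ⊓ B.orthogonal q = R ⊓ B.orthogonal q := by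
    refine le_antisymm (fun x ⟨hxU, hxq⟩ => ⟨hperp_le ⟨?_, ?_⟩, hxq⟩) (inf_le_inf_right _ hRU)
    · exact orthogonal_le (le_sup_left.trans hRU) (hU hxU)
    · exact mem_of_mem_orthogonal_of_maximal hB hq hxq (hU hxU x hxU)
  have hqU : q ⊓ B.orthogonal U = q ⊓ B.orthogonal R := by
    refine le_antisymm (inf_le_inf_left _ (orthogonal_le hRU)) fun x ⟨hxq, hxR⟩ => ⟨hxq, ?_⟩
    exact hU (hRU (hperp_le ⟨orthogonal_le le_sup_left hxR, hxq⟩))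
  have hdimU := finrank_add_finrank_inf_orthogonal hB U q
  have hdimR := finrank_add_finrank_inf_orthogonal hB R q
  rw [hUq, hqU] at hdimU
  exact (eq_of_le_of_finrank_le hRU (by omega)).ge

end LinearMap.BilinForm

theorem Submodule.lie_mem_sup {R L M : Type*} [Ring R] [LieRing L] [AddCommGroup M] [Module R M]
    [LieRingModule L M] {U V : Submodule R M} (hU : ∀ (x : L), ∀ ξ ∈ U, ⁅x, ξ⁆ ∈ U)
    (hV : ∀ (x : L), ∀ ξ ∈ V, ⁅x, ξ⁆ ∈ V) (x : L) {ξ : M} (hξ : ξ ∈ U ⊔ V) :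
    ⁅x, ξ⁆ ∈ U ⊔ V := by
  obtain ⟨u, hu, v, hv, rfl⟩ := mem_sup.mp hξ
  rw [lie_add]
  exact add_mem (mem_sup_left (hU x u hu)) (mem_sup_right (hV x v hv))

section fPerp

variable {L M : Type} [LieRing L] [LieAlgebra ℂ L] [AddCommGroup M] [Module ℂ M]
  {l : L →ₗ[ℂ] ℂ} {b : M →ₗ[ℂ] M →ₗ[ℂ] L}

theorem lie_mem_fPerp [LieRingModule L M] {F : Submodule ℂ M}
    (hl : ∀ x y : L, l ⁅x, y⁆ = 0)
    (hb_equivariant : ∀ (x : L) (ξ η : M), ⁅x, b ξ η⁆ = b ⁅x, ξ⁆ η + b ξ ⁅x, η⁆)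
    (hF : ∀ (x : L), ∀ ξ ∈ F, ⁅x, ξ⁆ ∈ F) (x : L) {ξ : M} (hξ : ξ ∈ fPerp l b F) :
    ⁅x, ξ⁆ ∈ fPerp l b F := by
  intro η hη
  rw [eq_sub_of_add_eq (hb_equivariant x ξ η).symm, map_sub, hl, hξ _ (hF x η hη), sub_zero]

theorem fPerp_eq_orthogonal_compr₂ (hb_symm : ∀ ξ η : M, b ξ η = b η ξ)
    (F : Submodule ℂ M) : fPerp l b F = BilinForm.orthogonal (b.compr₂ l) F := by
  ext ξ
  exact forall₂_congr fun η _ => by rw [hb_symm, compr₂_apply]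

end fPerp

theorem sum_with_perp_is_polarization_general
    (L : Type) [LieRing L] [LieAlgebra ℂ L]
    (M : Type) [AddCommGroup M] [Module ℂ M] [FiniteDimensional ℂ M]
    [LieRingModule L M]
    (b : M →ₗ[ℂ] M →ₗ[ℂ] L)
    (hb_symm : ∀ ξ η : M, b ξ η = b η ξ)
    (hb_equivariant : ∀ (x : L) (ξ η : M), ⁅x, b ξ η⁆ = b ⁅x, ξ⁆ η + b ξ ⁅x, η⁆)
    (l : L →ₗ[ℂ] ℂ)
    (hl : ∀ x y : L, l ⁅x, y⁆ = 0)
    -- `p` is a polarization for `l`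
    (p : Submodule ℂ M)
    (hp_iso : ∀ ξ ∈ p, ∀ η ∈ p, l (b ξ η) = 0)
    -- `q` is a polarization for `l`
    (q : Submodule ℂ M)
    (hq : ∀ (x : L), ∀ ξ ∈ q, ⁅x, ξ⁆ ∈ q)
    (hq_iso : ∀ ξ ∈ q, ∀ η ∈ q, l (b ξ η) = 0)
    (hq_max : ∀ U : Submodule ℂ M, (∀ ξ ∈ U, ∀ η ∈ U, l (b ξ η) = 0) → q ≤ U → U = q)
    -- `F` is a `𝔤₀`-submodule with `p ∩ q ⊆ F ⊆ p`
    (F : Submodule ℂ M)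
    (hF : ∀ (x : L), ∀ ξ ∈ F, ⁅x, ξ⁆ ∈ F)
    (hFhigh : F ≤ p) :
    -- then `R = F + (F^⊥ ∩ q)` is a polarization for `l`
    (∀ (x : L), ∀ ξ ∈ F ⊔ (fPerp l b F ⊓ q), ⁅x, ξ⁆ ∈ F ⊔ (fPerp l b F ⊓ q)) ∧
    (∀ ξ ∈ F ⊔ (fPerp l b F ⊓ q), ∀ η ∈ F ⊔ (fPerp l b F ⊓ q), l (b ξ η) = 0) ∧
    (∀ U : Submodule ℂ M, (∀ ξ ∈ U, ∀ η ∈ U, l (b ξ η) = 0) →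
      F ⊔ (fPerp l b F ⊓ q) ≤ U → U = F ⊔ (fPerp l b F ⊓ q)) := by
  open LinearMap.BilinForm in
  set B : BilinForm ℂ M := b.compr₂ l
  have hB : B.IsSymm := ⟨fun ξ η => congrArg l (hb_symm ξ η)⟩
  have hq_maximal : Maximal (fun U => U ≤ B.orthogonal U) q :=
    ⟨(le_orthogonal_compr₂_iff b l q).mpr hq_iso,
      fun U hU hqU => (hq_max U ((le_orthogonal_compr₂_iff b l U).mp hU) hqU).le⟩
  have hF_iso : F ≤ B.orthogonal F := (le_orthogonal_compr₂_iff b l F).mpr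
    fun ξ hξ η hη => hp_iso ξ (hFhigh hξ) η (hFhigh hη)
  have hR := maximal_sup_orthogonal_inf hB hq_maximal hF_iso
  rw [← fPerp_eq_orthogonal_compr₂ hb_symm] at hR
  refine ⟨fun x _ hξ => lie_mem_sup hF (fun y _ hη => ?_) x hξ,
    (le_orthogonal_compr₂_iff b l _).mp hR.1,
    fun U hU hRU => le_antisymm (hR.2 ((le_orthogonal_compr₂_iff b l U).mpr hU) hRU) hRU⟩
  exact ⟨lie_mem_fPerp hl hb_equivariant hF y hη.1, hq y _ hη.2⟩

/-- Let `𝔤 = 𝔤₀ ⊕ 𝔤₁` be a Lie superalgebra over `ℂ` encoded in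
components (`L` is `𝔤₀`, `M` is `𝔤₁`, `b` the bracket of two odd elements), with
`𝔤₀` solvable.  Let `l : 𝔤₀ → ℂ` vanish on `⁅𝔤₀,𝔤₀⁆`, let `p` and `q` be
polarizations for `l`, and let `F` be a `𝔤₀`-submodule with `p ∩ q ⊆ F ⊆ p`.
Then `R = F + (F^⊥ ∩ q)` is a polarization for `l`. -/
theorem sum_with_perp_is_polarization
    (L : Type) [LieRing L] [LieAlgebra ℂ L] [FiniteDimensional ℂ L]
    [LieAlgebra.IsSolvable L]
    (M : Type) [AddCommGroup M] [Module ℂ M] [FiniteDimensional ℂ M]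
    [LieRingModule L M] [LieModule ℂ L M]
    (b : M →ₗ[ℂ] M →ₗ[ℂ] L)
    (hb_symm : ∀ ξ η : M, b ξ η = b η ξ)
    (hb_equivariant : ∀ (x : L) (ξ η : M), ⁅x, b ξ η⁆ = b ⁅x, ξ⁆ η + b ξ ⁅x, η⁆)
    (hb_jacobi : ∀ ξ η ζ : M, ⁅b ξ η, ζ⁆ + ⁅b η ζ, ξ⁆ + ⁅b ζ ξ, η⁆ = 0)
    (l : L →ₗ[ℂ] ℂ)
    (hl : ∀ x y : L, l ⁅x, y⁆ = 0)
    -- `p` is a polarization for `l`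
    (p : Submodule ℂ M)
    (hp : ∀ (x : L), ∀ ξ ∈ p, ⁅x, ξ⁆ ∈ p)
    (hp_iso : ∀ ξ ∈ p, ∀ η ∈ p, l (b ξ η) = 0)
    (hp_max : ∀ U : Submodule ℂ M, (∀ ξ ∈ U, ∀ η ∈ U, l (b ξ η) = 0) → p ≤ U → U = p)
    -- `q` is a polarization for `l`
    (q : Submodule ℂ M)
    (hq : ∀ (x : L), ∀ ξ ∈ q, ⁅x, ξ⁆ ∈ q)
    (hq_iso : ∀ ξ ∈ q, ∀ η ∈ q, l (b ξ η) = 0)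
    (hq_max : ∀ U : Submodule ℂ M, (∀ ξ ∈ U, ∀ η ∈ U, l (b ξ η) = 0) → q ≤ U → U = q)
    -- `F` is a `𝔤₀`-submodule with `p ∩ q ⊆ F ⊆ p`
    (F : Submodule ℂ M)
    (hF : ∀ (x : L), ∀ ξ ∈ F, ⁅x, ξ⁆ ∈ F)
    (hFlow : p ⊓ q ≤ F) (hFhigh : F ≤ p) :
    -- then `R = F + (F^⊥ ∩ q)` is a polarization for `l`
    (∀ (x : L), ∀ ξ ∈ F ⊔ (fPerp l b F ⊓ q), ⁅x, ξ⁆ ∈ F ⊔ (fPerp l b F ⊓ q)) ∧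
    (∀ ξ ∈ F ⊔ (fPerp l b F ⊓ q), ∀ η ∈ F ⊔ (fPerp l b F ⊓ q), l (b ξ η) = 0) ∧
    (∀ U : Submodule ℂ M, (∀ ξ ∈ U, ∀ η ∈ U, l (b ξ η) = 0) →
      F ⊔ (fPerp l b F ⊓ q) ≤ U → U = F ⊔ (fPerp l b F ⊓ q)) :=
  sum_with_perp_is_polarization_general L M b hb_symm hb_equivariant l hl p hp_iso q hq hq_iso
    hq_max F hF hFhigh
end

section
/- Let 𝔤 = 𝔤₀ ⊕ 𝔤₁ be a Lie superalgebra over ℂ encoded in components, with 𝔤₀ solvable. Let λ : 𝔤₀ → ℂ vanish on ⁅𝔤₀,𝔤₀⁆, let 𝔭 be a polarization for λ, and suppose the rank of the form f_λ is odd. Let 𝔭^⊥ = { ξ ∈ 𝔤₁ : f_λ(ξ, 𝔭) = 0 } (so 𝔭 ⊊ 𝔭^⊥). Then x•ξ ∈ 𝔭 for every x ∈ 𝔤₀ and every ξ ∈ 𝔭^⊥; that is, 𝔤₀ acts by zero on the quotient 𝔭^⊥/𝔭. -/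
/-!
For the symmetric form `B = l ∘ b` on `𝔤₁`, the vanishing of `l` on `⁅𝔤₀, 𝔤₀⁆` makes `B`
invariant under `𝔤₀`. A maximal totally isotropic subspace `p` leaves no isotropic vector in
`p^⊥ \ p`, and over an algebraically closed field two orthogonal anisotropic vectors of `p^⊥`
would combine into one, so `p^⊥ / p` is anisotropic of dimension at most one. For `ξ ∈ p^⊥`
the vector `⁅x, ξ⁆` lies in `p^⊥` and, by invariance and `2 ≠ 0`, is orthogonal to `ξ`; hence
`ξ` or `⁅x, ξ⁆` lies in `p`, and in both cases `⁅x, ξ⁆ ∈ p`.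
-/

open Submodule

namespace LinearMap.BilinForm

section Field

variable {K V : Type*} [Field K] [AddCommGroup V] [Module K V] {B : LinearMap.BilinForm K V}
  {p : Submodule K V} {ξ ζ : V}

lemma sup_span_singleton_le_orthogonal (hB : B.IsSymm) (hp : p ≤ B.orthogonal p)
    (hξ : ξ ∈ B.orthogonal p) (hξξ : B ξ ξ = 0) :
    p ⊔ K ∙ ξ ≤ B.orthogonal (p ⊔ K ∙ ξ) := by
  intro u hu v hv
  obtain ⟨y, hy, _, hz, rfl⟩ := mem_sup.1 hu
  obtain ⟨y', hy', _, hz', rfl⟩ := mem_sup.1 hv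
  obtain ⟨c, rfl⟩ := mem_span_singleton.1 hz
  obtain ⟨c', rfl⟩ := mem_span_singleton.1 hz'
  have hξy : B ξ y = 0 := (hB.eq ξ y).trans (hξ y hy)
  simp [hp hy y' hy', hξ y' hy', hξy, hξξ]

lemma mem_of_mem_orthogonal_of_self_eq_zero (hB : B.IsSymm)
    (hp : Maximal (fun U : Submodule K V ↦ U ≤ B.orthogonal U) p)
    (hξ : ξ ∈ B.orthogonal p) (hξξ : B ξ ξ = 0) : ξ ∈ p := by
  rw [hp.eq_of_le (sup_span_singleton_le_orthogonal hB hp.prop hξ hξξ) le_sup_left]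
  exact mem_sup_right (mem_span_singleton_self ξ)

lemma mem_or_mem_of_mem_orthogonal [IsAlgClosed K] (hB : B.IsSymm)
    (hp : Maximal (fun U : Submodule K V ↦ U ≤ B.orthogonal U) p)
    (hξ : ξ ∈ B.orthogonal p) (hζ : ζ ∈ B.orthogonal p) (hξζ : B ξ ζ = 0) :
    ξ ∈ p ∨ ζ ∈ p := by
  by_contra! ⟨hξp, hζp⟩
  have hξξ : B ξ ξ ≠ 0 := fun h ↦ hξp (mem_of_mem_orthogonal_of_self_eq_zero hB hp hξ h)
  have hζζ : B ζ ζ ≠ 0 := fun h ↦ hζp (mem_of_mem_orthogonal_of_self_eq_zero hB hp hζ h)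
  obtain ⟨t, ht⟩ := IsAlgClosed.exists_pow_nat_eq (-B ξ ξ / B ζ ζ) two_pos
  have ht' : t ^ 2 * B ζ ζ = -B ξ ξ := by rw [ht]; field_simp
  have hζξ : B ζ ξ = 0 := (hB.eq ζ ξ).trans hξζ
  have hv : ξ + t • ζ ∈ p := by
    refine mem_of_mem_orthogonal_of_self_eq_zero hB hp (add_mem hξ (smul_mem _ t hζ)) ?_
    simp only [map_add, map_smul, LinearMap.add_apply, LinearMap.smul_apply, smul_eq_mul, hξζ,
      hζξ]
    linear_combination ht'
  -- `ξ ⊥ p` but `B (ξ + t • ζ) ξ = B ξ ξ ≠ 0`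
  apply hξξ
  simpa [hζξ] using hξ _ hv

end Field

lemma lieInvariant_compr₂ {R L M : Type*} [CommRing R] [LieRing L] [Module R L]
    [AddCommGroup M] [Module R M] [LieRingModule L M] (b : M →ₗ[R] M →ₗ[R] L) (l : L →ₗ[R] R)
    (hb : ∀ (x : L) (ξ η : M), ⁅x, b ξ η⁆ = b ⁅x, ξ⁆ η + b ξ ⁅x, η⁆)
    (hl : ∀ x y : L, l ⁅x, y⁆ = 0) :
    lieInvariant L (b.compr₂ l) := by
  intro x ξ η
  have h := congrArg l (hb x ξ η)
  rw [hl, map_add] at h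
  simp only [compr₂_apply]
  linear_combination -h

variable {K L V : Type*} [Field K] [LieRing L] [AddCommGroup V] [Module K V]
  [LieRingModule L V] {B : LinearMap.BilinForm K V}

lemma lie_mem_of_mem_orthogonal [IsAlgClosed K] (hK : ringChar K ≠ 2) (hB : B.IsSymm)
    (hBL : B.lieInvariant L) {p : LieSubmodule K L V}
    (hp : Maximal (fun U : Submodule K V ↦ U ≤ B.orthogonal U) p)
    {ξ : V} (hξ : ξ ∈ B.orthogonal p) (x : L) : ⁅x, ξ⁆ ∈ p := by
  have hxξ : ⁅x, ξ⁆ ∈ B.orthogonal p :=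
    (LieAlgebra.InvariantForm.orthogonal B hBL p).lie_mem hξ
  have hξxξ : B ξ ⁅x, ξ⁆ = 0 := by
    rw [← Ring.eq_self_iff_eq_zero_of_char_ne_two hK, ← hBL, hB.eq]
  rcases mem_or_mem_of_mem_orthogonal hB hp hξ hxξ hξxξ with hξp | hxξp
  · exact p.lie_mem hξp
  · exact hxξp

end LinearMap.BilinForm

theorem even_part_acts_trivially_on_perp_quotient_general
    (L : Type) [LieRing L] [LieAlgebra ℂ L]
    (M : Type) [AddCommGroup M] [Module ℂ M]
    [LieRingModule L M]
    (b : M →ₗ[ℂ] M →ₗ[ℂ] L)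
    (hb_symm : ∀ ξ η : M, b ξ η = b η ξ)
    (hb_equivariant : ∀ (x : L) (ξ η : M), ⁅x, b ξ η⁆ = b ⁅x, ξ⁆ η + b ξ ⁅x, η⁆)
    (l : L →ₗ[ℂ] ℂ)
    (hl : ∀ x y : L, l ⁅x, y⁆ = 0)
    -- `p` is a polarization for `l`
    (p : Submodule ℂ M)
    (hp : ∀ (x : L), ∀ ξ ∈ p, ⁅x, ξ⁆ ∈ p)
    (hp_iso : ∀ ξ ∈ p, ∀ η ∈ p, l (b ξ η) = 0)
    (hp_max : ∀ U : Submodule ℂ M, (∀ ξ ∈ U, ∀ η ∈ U, l (b ξ η) = 0) → p ≤ U → U = p) :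
    -- then `𝔤₀` maps `p^⊥` into `p`, i.e. `𝔤₀` acts by zero on `p^⊥/p`
    ∀ ξ : M, (∀ η ∈ p, l (b ξ η) = 0) → ∀ x : L, ⁅x, ξ⁆ ∈ p := by
  let B : LinearMap.BilinForm ℂ M := b.compr₂ l
  have hB : B.IsSymm := ⟨fun ξ η ↦ congrArg l (hb_symm ξ η)⟩
  let P : LieSubmodule ℂ L M := { p with lie_mem := hp _ _ }
  have hP : Maximal (fun U : Submodule ℂ M ↦ U ≤ B.orthogonal U) P :=
    ⟨fun ξ hξ η hη ↦ hp_iso η hη ξ hξ,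
      fun U hU hle ↦ (hp_max U (fun ξ hξ η hη ↦ hU hη ξ hξ) hle).le⟩
  intro ξ hξ x
  exact LinearMap.BilinForm.lie_mem_of_mem_orthogonal (by simp [ringChar.eq_zero]) hB
    (LinearMap.BilinForm.lieInvariant_compr₂ b l hb_equivariant hl) hP
    (fun η hη ↦ (hB.eq η ξ).trans (hξ η hη)) x

/-- Let `𝔤 = 𝔤₀ ⊕ 𝔤₁` be a Lie superalgebra over `ℂ` encoded in
components (`L` is `𝔤₀`, `M` is `𝔤₁`, `b` the bracket of two odd elements), with
`𝔤₀` solvable.  Let `l : 𝔤₀ → ℂ` vanish on `⁅𝔤₀,𝔤₀⁆`, let `p` be a polarization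
for `l`, and suppose the rank of the form `f_l(ξ,η) = l(b(ξ,η))` (that is,
`dim 𝔤₁ − dim (radical of f_l)`) is odd.  Then `⁅x, ξ⁆ ∈ p` for every `x ∈ 𝔤₀` and
every `ξ ∈ p^⊥ = {ξ : f_l(ξ, p) = 0}`; that is, `𝔤₀` acts by zero on `p^⊥/p`. -/
theorem even_part_acts_trivially_on_perp_quotient
    (L : Type) [LieRing L] [LieAlgebra ℂ L] [FiniteDimensional ℂ L]
    [LieAlgebra.IsSolvable L]
    (M : Type) [AddCommGroup M] [Module ℂ M] [FiniteDimensional ℂ M]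
    [LieRingModule L M] [LieModule ℂ L M]
    (b : M →ₗ[ℂ] M →ₗ[ℂ] L)
    (hb_symm : ∀ ξ η : M, b ξ η = b η ξ)
    (hb_equivariant : ∀ (x : L) (ξ η : M), ⁅x, b ξ η⁆ = b ⁅x, ξ⁆ η + b ξ ⁅x, η⁆)
    (hb_jacobi : ∀ ξ η ζ : M, ⁅b ξ η, ζ⁆ + ⁅b η ζ, ξ⁆ + ⁅b ζ ξ, η⁆ = 0)
    (l : L →ₗ[ℂ] ℂ)
    (hl : ∀ x y : L, l ⁅x, y⁆ = 0)
    -- `p` is a polarization for `l`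
    (p : Submodule ℂ M)
    (hp : ∀ (x : L), ∀ ξ ∈ p, ⁅x, ξ⁆ ∈ p)
    (hp_iso : ∀ ξ ∈ p, ∀ η ∈ p, l (b ξ η) = 0)
    (hp_max : ∀ U : Submodule ℂ M, (∀ ξ ∈ U, ∀ η ∈ U, l (b ξ η) = 0) → p ≤ U → U = p)
    -- the rank of `f_l` is odd
    (hrank : Odd (Module.finrank ℂ M - Module.finrank ℂ ↥(LinearMap.ker (b.compr₂ l)))) :
    -- then `𝔤₀` maps `p^⊥` into `p`, i.e. `𝔤₀` acts by zero on `p^⊥/p`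
    ∀ ξ : M, (∀ η ∈ p, l (b ξ η) = 0) → ∀ x : L, ⁅x, ξ⁆ ∈ p :=
  even_part_acts_trivially_on_perp_quotient_general L M b hb_symm hb_equivariant l hl p hp hp_iso
    hp_max
end
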